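/- arXiv:2402.10116 — 11 statements merged into one kernel-verified Lean document; each statement's English description precedes it below -/
import Mathlib

section
/- Let t be a cycle type of size n, let 𝔰 ∈ Sₙ be a fixed t-cyclic permutation, and let U₁,…,Uₙ be i.i.d. Uniform[0,1] random variables. Set Z_i := (U_i, U_{𝔰(i)}) and 𝒫 := {Z_i : i ∈ [n]}. Then the permutation perm(𝒫) obtained by reading the relative order of y-coordinates along increasing x-coordinates is uniformly distributed on the set of permutations with cycle type t. -/
open MeasureTheory ProbabilityTheory
open scoped ENNReal

/-- Standardization of a tuple of reals (rank permutation). -/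
noncomputable def stdz {n : ℕ} (y : Fin n → ℝ) : Equiv.Perm (Fin n) := (Tuple.sort y)⁻¹

/-- The permutation of a finite planar point set with distinct x- and y-coordinates:
the point with `i`-th smallest x-coordinate has the `(perm i)`-th smallest y-coordinate. -/
noncomputable def permOfPoints {n : ℕ} (X Y : Fin n → ℝ) : Equiv.Perm (Fin n) :=
  stdz Y * (stdz X)⁻¹

/-- L1 -/
lemma stdz_lt_iff {n : ℕ} {y : Fin n → ℝ} (hy : Function.Injective y) (i j : Fin n) :
    stdz y i < stdz y j ↔ y i < y j := by
  have hmono : StrictMono (y ∘ Tuple.sort y) :=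
    (Tuple.monotone_sort y).strictMono_of_injective (hy.comp (Tuple.sort y).injective)
  have h1 : ∀ k, (y ∘ Tuple.sort y) (stdz y k) = y k := by
    intro k; simp [stdz, Function.comp]
  rw [← hmono.lt_iff_lt, h1, h1]

/-- L2 -/
lemma perm_eq_of_forall_lt_iff {n : ℕ} {σ π : Equiv.Perm (Fin n)}
    (h : ∀ i j, σ i < σ j ↔ π i < π j) : σ = π := by
  have hs : StrictMono (fun k => π (σ.symm k)) := by
    intro a b hab
    have : σ (σ.symm a) < σ (σ.symm b) := by simpa using hab
    exact (h _ _).1 this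
  have hrange : Set.range (fun k => π (σ.symm k)) = Set.range (id : Fin n → Fin n) := by
    rw [Set.range_id]
    exact Set.range_eq_univ.2 (π.surjective.comp σ.symm.surjective)
  haveI inst : WellFoundedLT (Fin n) := inferInstance
  have heq := (@StrictMono.range_inj (Fin n) (Fin n) _ _ inst _ _ hs strictMono_id).1 hrange
  ext k
  have h2 := congrFun heq (σ k)
  simp only [Equiv.symm_apply_apply, id] at h2
  simp [h2]

/-- L3 -/
lemma stdz_comp_perm {n : ℕ} {y : Fin n → ℝ} (hy : Function.Injective y)
    (ρ : Equiv.Perm (Fin n)) : stdz (y ∘ ρ) = stdz y * ρ := by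
  apply perm_eq_of_forall_lt_iff
  intro i j
  rw [stdz_lt_iff (hy.comp ρ.injective)]
  exact (stdz_lt_iff hy (ρ i) (ρ j)).symm

def ordSet {n : ℕ} (π : Equiv.Perm (Fin n)) : Set (Fin n → ℝ) :=
  {y | ∀ i j, y i < y j ↔ π i < π j}

lemma mem_ordSet_iff {n : ℕ} {π : Equiv.Perm (Fin n)} {y : Fin n → ℝ} :
    y ∈ ordSet π ↔ Function.Injective y ∧ stdz y = π := by
  constructor
  · intro h
    have hinj : Function.Injective y := by
      intro i j hij
      by_contra hne
      rcases (π.injective.ne hne).lt_or_gt with hlt | hlt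
      · exact absurd ((h i j).2 hlt) (by simp [hij])
      · exact absurd ((h j i).2 hlt) (by simp [hij])
    refine ⟨hinj, perm_eq_of_forall_lt_iff fun i j => ?_⟩
    rw [stdz_lt_iff hinj, h i j]
  · rintro ⟨hinj, rfl⟩
    intro i j
    exact (stdz_lt_iff hinj i j).symm

lemma measurableSet_ordSet {n : ℕ} (π : Equiv.Perm (Fin n)) :
    MeasurableSet (ordSet π) := by
  have : ordSet π = ⋂ i, ⋂ j, {y : Fin n → ℝ | y i < y j ↔ π i < π j} := by
    ext y; simp [ordSet, Set.mem_iInter]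
  rw [this]
  refine MeasurableSet.iInter fun i => MeasurableSet.iInter fun j => ?_
  by_cases h : π i < π j
  · simp only [h, iff_true]
    exact measurableSet_lt (measurable_pi_apply i) (measurable_pi_apply j)
  · simp only [h, iff_false]
    have : {y : Fin n → ℝ | ¬ y i < y j} = {y : Fin n → ℝ | y i < y j}ᶜ := rfl
    rw [this]
    exact (measurableSet_lt (measurable_pi_apply i) (measurable_pi_apply j)).compl

lemma preimage_comp_ordSet {n : ℕ} (π ρ : Equiv.Perm (Fin n)) :
    (fun y : Fin n → ℝ => y ∘ ρ) ⁻¹' ordSet π = ordSet (π * ρ⁻¹) := by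
  ext y
  simp only [Set.mem_preimage, ordSet, Set.mem_setOf_eq, Function.comp_apply,
    Equiv.Perm.mul_apply]
  constructor
  · intro h i j
    have := h (ρ⁻¹ i) (ρ⁻¹ j)
    simpa using this
  · intro h i j
    have := h (ρ i) (ρ j)
    simpa using this

lemma ordSet_disjoint {n : ℕ} {π π' : Equiv.Perm (Fin n)} (h : π ≠ π') :
    Disjoint (ordSet π) (ordSet π') := by
  rw [Set.disjoint_left]
  intro y hy hy'
  exact h ((mem_ordSet_iff.1 hy).2.symm.trans (mem_ordSet_iff.1 hy').2)

/-- Geometric construction: for a fixed `t`-cyclic permutation `𝔰` and i.i.d.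
`Uniform[0,1]` variables `U₁,…,Uₙ`, the permutation of the point set
`𝒫 = {(Uᵢ, U_{𝔰(i)})}` is uniformly distributed on the set of permutations with the same
cycle type as `𝔰`. -/
theorem stmt2 {Ω : Type*} [MeasurableSpace Ω] (μ : Measure Ω) [IsProbabilityMeasure μ]
    (n : ℕ) (𝔰 : Equiv.Perm (Fin n))
    (U : Fin n → Ω → ℝ) (hmeas : ∀ i, Measurable (U i))
    (hindep : iIndepFun U μ)
    (hlaw : ∀ i, Measure.map (U i) μ = volume.restrict (Set.Icc (0:ℝ) 1)) :
    (∀ τ : Equiv.Perm (Fin n), τ.cycleType = 𝔰.cycleType →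
      μ {ω | permOfPoints (fun i => U i ω) (fun i => U (𝔰 i) ω) = τ}
        = ((Finset.univ.filter
            fun ρ : Equiv.Perm (Fin n) => ρ.cycleType = 𝔰.cycleType).card : ℝ≥0∞)⁻¹) ∧
    (∀ τ : Equiv.Perm (Fin n), τ.cycleType ≠ 𝔰.cycleType →
      μ {ω | permOfPoints (fun i => U i ω) (fun i => U (𝔰 i) ω) = τ} = 0) := by
  classical
  set ν : Measure ℝ := volume.restrict (Set.Icc (0:ℝ) 1) with hν
  haveI hνprob : IsProbabilityMeasure ν := ⟨by rw [hν]; simp [Real.volume_Icc]⟩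
  set V : Ω → (Fin n → ℝ) := fun ω i => U i ω with hVdef
  have hVmeas : Measurable V := measurable_pi_lambda _ hmeas
  set P : Measure (Fin n → ℝ) := Measure.pi (fun _ => ν) with hPdef
  haveI : IsProbabilityMeasure P := by rw [hPdef]; infer_instance
  -- law of the vector V
  have hmapV : Measure.map V μ = P := by
    rw [hPdef]
    refine (Measure.pi_eq fun s hs => ?_).symm
    rw [Measure.map_apply hVmeas (MeasurableSet.univ_pi hs)]
    have hpre : V ⁻¹' Set.pi Set.univ s = ⋂ i ∈ Finset.univ, U i ⁻¹' s i := by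
      ext ω; simp [hVdef, Set.mem_pi]
    rw [hpre, hindep.measure_inter_preimage_eq_mul Finset.univ (fun i _ => hs i)]
    refine Finset.prod_congr rfl fun i _ => ?_
    rw [← Measure.map_apply (hmeas i) (hs i), hlaw i]
  -- diagonal events are null
  have hdiag : ∀ i j : Fin n, i ≠ j → μ {ω | U i ω = U j ω} = 0 := by
    intro i j hij
    have hind : IndepFun (U i) (U j) μ := hindep.indepFun hij
    have hmap2 : Measure.map (fun ω => (U i ω, U j ω)) μ = ν.prod ν := by
      have h0 := (indepFun_iff_map_prod_eq_prod_map_map (hmeas i).aemeasurable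
        (hmeas j).aemeasurable).1 hind
      rw [hlaw i, hlaw j] at h0
      exact h0
    have hDmeas : MeasurableSet {p : ℝ × ℝ | p.1 = p.2} :=
      measurableSet_eq_fun measurable_fst measurable_snd
    have hset : {ω | U i ω = U j ω} = (fun ω => (U i ω, U j ω)) ⁻¹' {p | p.1 = p.2} := rfl
    rw [hset, ← Measure.map_apply ((hmeas i).prodMk (hmeas j)) hDmeas, hmap2,
      Measure.prod_apply hDmeas]
    have hz : ∀ x : ℝ, ν (Prod.mk x ⁻¹' {p : ℝ × ℝ | p.1 = p.2}) = 0 := by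
      intro x
      have : (Prod.mk x ⁻¹' {p : ℝ × ℝ | p.1 = p.2}) = {x} := by ext z; simp [eq_comm]
      rw [this, hν]
      exact measure_singleton x
    simp [hz]
  have hninj : μ {ω | ¬ Function.Injective (V ω)} = 0 := by
    have hsub : {ω | ¬ Function.Injective (V ω)}
        ⊆ ⋃ i, ⋃ j, {ω | i ≠ j ∧ U i ω = U j ω} := by
      intro ω hω
      rw [Set.mem_setOf_eq, Function.not_injective_iff] at hω
      obtain ⟨i, j, hval, hij⟩ := hω
      exact Set.mem_iUnion.2 ⟨i, Set.mem_iUnion.2 ⟨j, ⟨hij, hval⟩⟩⟩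
    refine measure_mono_null hsub ?_
    refine measure_iUnion_null fun i => measure_iUnion_null fun j => ?_
    by_cases hij : i = j
    · subst hij; simp
    · exact measure_mono_null (fun ω h => h.2) (hdiag i j hij)
  -- equal probabilities of order sets
  have hAeq : ∀ π : Equiv.Perm (Fin n), P (ordSet π) = P (ordSet 1) := by
    intro π
    have hTmeas : Measurable (fun y : Fin n → ℝ => y ∘ π) :=
      measurable_pi_lambda _ fun i => measurable_pi_apply _
    have hTpres : Measure.map (fun y : Fin n → ℝ => y ∘ π) P = P := by
      nth_rewrite 2 [hPdef]
      refine (Measure.pi_eq fun s hs => ?_).symm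
      rw [Measure.map_apply hTmeas (MeasurableSet.univ_pi hs)]
      have hpre : (fun y : Fin n → ℝ => y ∘ π) ⁻¹' Set.pi Set.univ s
          = Set.pi Set.univ (fun k => s (π.symm k)) := by
        ext y
        simp only [Set.mem_preimage, Set.mem_pi, Set.mem_univ, forall_true_left,
          Function.comp_apply]
        constructor
        · intro h k; simpa using h (π.symm k)
        · intro h i; simpa using h (π i)
      rw [hpre, hPdef, Measure.pi_pi]
      exact Equiv.prod_comp π.symm (fun i => ν (s i))
    calc P (ordSet π) = Measure.map (fun y : Fin n → ℝ => y ∘ π) P (ordSet π) := by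
          rw [hTpres]
      _ = P ((fun y : Fin n → ℝ => y ∘ π) ⁻¹' ordSet π) :=
          Measure.map_apply hTmeas (measurableSet_ordSet π)
      _ = P (ordSet (π * π⁻¹)) := by rw [preimage_comp_ordSet]
      _ = P (ordSet 1) := by simp
  have hVpre : ∀ π : Equiv.Perm (Fin n), μ (V ⁻¹' ordSet π) = P (ordSet 1) := by
    intro π
    rw [← Measure.map_apply hVmeas (measurableSet_ordSet π), hmapV, hAeq π]
  -- measure of a union of order-set preimages
  have hWcard : ∀ S : Finset (Equiv.Perm (Fin n)),
      μ (⋃ π ∈ S, V ⁻¹' ordSet π) = (S.card : ℝ≥0∞) * P (ordSet 1) := by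
    intro S
    have hdisj : (↑S : Set (Equiv.Perm (Fin n))).PairwiseDisjoint
        (fun π => V ⁻¹' ordSet π) := by
      intro π _ π' _ hne
      exact (ordSet_disjoint hne).preimage V
    rw [measure_biUnion_finset hdisj (fun π _ => hVmeas (measurableSet_ordSet π))]
    rw [Finset.sum_congr rfl (fun π _ => hVpre π), Finset.sum_const, nsmul_eq_mul]
  -- total mass
  have htotal : ((Finset.univ : Finset (Equiv.Perm (Fin n))).card : ℝ≥0∞) * P (ordSet 1)
      = 1 := by
    rw [← hWcard Finset.univ]
    refine le_antisymm prob_le_one ?_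
    have h1 : (1 : ℝ≥0∞) = μ Set.univ := (measure_univ).symm
    rw [h1]
    calc μ (Set.univ : Set Ω)
        ≤ μ (Set.univ ∩ ⋃ π ∈ (Finset.univ : Finset (Equiv.Perm (Fin n))), V ⁻¹' ordSet π)
          + μ (Set.univ \ ⋃ π ∈ (Finset.univ : Finset (Equiv.Perm (Fin n))), V ⁻¹' ordSet π) :=
          measure_le_inter_add_diff μ _ _
      _ ≤ μ (⋃ π ∈ (Finset.univ : Finset (Equiv.Perm (Fin n))), V ⁻¹' ordSet π) + 0 := by
          refine add_le_add (measure_mono Set.inter_subset_right) ?_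
          refine le_trans (measure_mono_null ?_ hninj).le ?_
          · intro ω hω
            rw [Set.mem_setOf_eq]
            intro hinj
            refine hω.2 ?_
            simp only [Set.mem_iUnion, Finset.mem_univ, Set.mem_preimage]
            exact ⟨stdz (V ω), trivial, mem_ordSet_iff.2 ⟨hinj, rfl⟩⟩
          · exact le_refl 0
      _ = μ (⋃ π ∈ (Finset.univ : Finset (Equiv.Perm (Fin n))), V ⁻¹' ordSet π) := add_zero _
  -- main event formula
  have hkey : ∀ τ : Equiv.Perm (Fin n),
      μ {ω | permOfPoints (fun i => U i ω) (fun i => U (𝔰 i) ω) = τ}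
        = ((Finset.univ.filter fun π : Equiv.Perm (Fin n) => π * 𝔰 * π⁻¹ = τ).card : ℝ≥0∞)
          * P (ordSet 1) := by
    intro τ
    set Sτ := Finset.univ.filter fun π : Equiv.Perm (Fin n) => π * 𝔰 * π⁻¹ = τ with hSτ
    set E := {ω | permOfPoints (fun i => U i ω) (fun i => U (𝔰 i) ω) = τ} with hE
    set W := ⋃ π ∈ Sτ, V ⁻¹' ordSet π with hWd
    have hperm : ∀ ω, Function.Injective (V ω) →
        permOfPoints (fun i => U i ω) (fun i => U (𝔰 i) ω)
          = stdz (V ω) * 𝔰 * (stdz (V ω))⁻¹ := by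
      intro ω hinj
      have h2 : (fun i => U (𝔰 i) ω) = V ω ∘ 𝔰 := rfl
      have h3 : (fun i => U i ω) = V ω := rfl
      rw [permOfPoints, h2, h3, stdz_comp_perm hinj]
    have hWE : W ⊆ E := by
      intro ω hω
      rw [hWd] at hω
      simp only [Set.mem_iUnion, Set.mem_preimage] at hω
      obtain ⟨π, hπS, hπ⟩ := hω
      obtain ⟨hinj, hstd⟩ := mem_ordSet_iff.1 hπ
      rw [hSτ, Finset.mem_filter] at hπS
      rw [hE, Set.mem_setOf_eq, hperm ω hinj, hstd]
      exact hπS.2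
    have hEW : E \ W ⊆ {ω | ¬ Function.Injective (V ω)} := by
      rintro ω ⟨hωE, hωW⟩
      rw [Set.mem_setOf_eq]
      intro hinj
      refine hωW ?_
      rw [hWd]
      simp only [Set.mem_iUnion, Set.mem_preimage]
      refine ⟨stdz (V ω), ?_, mem_ordSet_iff.2 ⟨hinj, rfl⟩⟩
      rw [hSτ, Finset.mem_filter]
      refine ⟨Finset.mem_univ _, ?_⟩
      rw [hE, Set.mem_setOf_eq, hperm ω hinj] at hωE
      exact hωE
    have hEμ : μ E = μ W := by
      refine le_antisymm ?_ (measure_mono hWE)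
      calc μ E ≤ μ (E ∩ W) + μ (E \ W) := measure_le_inter_add_diff μ E W
        _ ≤ μ W + 0 := add_le_add (measure_mono Set.inter_subset_right)
            (le_trans (measure_mono hEW) (le_of_eq hninj))
        _ = μ W := add_zero _
    rw [hEμ, hWd, hWcard Sτ]
  -- counting
  set C := Finset.univ.filter (fun ρ : Equiv.Perm (Fin n) => ρ.cycleType = 𝔰.cycleType)
    with hC
  set a := (Finset.univ.filter fun π : Equiv.Perm (Fin n) => π * 𝔰 * π⁻¹ = 𝔰).card with ha
  have hfibcard : ∀ τ ∈ C,
      (Finset.univ.filter fun π : Equiv.Perm (Fin n) => π * 𝔰 * π⁻¹ = τ).card = a := by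
    intro τ hτ
    rw [hC, Finset.mem_filter] at hτ
    obtain ⟨π₀, hπ₀⟩ := isConj_iff.1 (Equiv.Perm.isConj_iff_cycleType_eq.2 hτ.2.symm)
    rw [ha]
    refine Finset.card_bij (fun π _ => π₀⁻¹ * π) ?_ ?_ ?_
    · intro π hπ
      rw [Finset.mem_filter] at hπ ⊢
      refine ⟨Finset.mem_univ _, ?_⟩
      have h1 : (π₀⁻¹ * π) * 𝔰 * (π₀⁻¹ * π)⁻¹ = π₀⁻¹ * (π * 𝔰 * π⁻¹) * π₀ := by group
      rw [h1, hπ.2, ← hπ₀]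
      group
    · intro π hπ π' hπ' h
      exact mul_left_cancel h
    · intro b hb
      refine ⟨π₀ * b, ?_, by group⟩
      rw [Finset.mem_filter] at hb ⊢
      refine ⟨Finset.mem_univ _, ?_⟩
      have h1 : (π₀ * b) * 𝔰 * (π₀ * b)⁻¹ = π₀ * (b * 𝔰 * b⁻¹) * π₀⁻¹ := by group
      rw [h1, hb.2, hπ₀]
  have hcardtot : (Finset.univ : Finset (Equiv.Perm (Fin n))).card = C.card * a := by
    rw [Finset.card_eq_sum_card_fiberwise
      (f := fun π : Equiv.Perm (Fin n) => π * 𝔰 * π⁻¹) (t := C)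
      (fun π _ => by rw [hC, Finset.mem_coe, Finset.mem_filter]; exact ⟨Finset.mem_univ _,
        Equiv.Perm.cycleType_conj⟩)]
    rw [Finset.sum_congr rfl hfibcard, Finset.sum_const, smul_eq_mul]
  constructor
  · intro τ hτcyc
    have hτC : τ ∈ C := by rw [hC, Finset.mem_filter]; exact ⟨Finset.mem_univ _, hτcyc⟩
    rw [hkey τ, hfibcard τ hτC]
    refine ENNReal.eq_inv_of_mul_eq_one_left ?_
    have h2 : (((Finset.univ : Finset (Equiv.Perm (Fin n))).card : ℕ) : ℝ≥0∞)
        = (C.card : ℝ≥0∞) * (a : ℝ≥0∞) := by rw [hcardtot]; push_cast; ring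
    calc (a : ℝ≥0∞) * P (ordSet 1) * (C.card : ℝ≥0∞)
        = ((C.card : ℝ≥0∞) * (a : ℝ≥0∞)) * P (ordSet 1) := by ring
      _ = (((Finset.univ : Finset (Equiv.Perm (Fin n))).card : ℕ) : ℝ≥0∞) * P (ordSet 1) := by
          rw [h2]
      _ = 1 := htotal
  · intro τ hτcyc
    rw [hkey τ]
    have hempty : (Finset.univ.filter fun π : Equiv.Perm (Fin n) => π * 𝔰 * π⁻¹ = τ) = ∅ := by
      refine Finset.filter_eq_empty_iff.2 fun {π} _ => ?_
      intro h
      exact hτcyc (by rw [← h, Equiv.Perm.cycleType_conj])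
    rw [hempty]
    simp
end

section
/- With the geometric construction 𝒫 = {(U_i, U_{𝔰(i)}) : i ∈ [n]} for a fixed t-cyclic permutation 𝔰 and i.i.d. uniform U_i, if σ = st(U₁,…,Uₙ) then almost surely perm(𝒫) = σ ∘ 𝔰 ∘ σ⁻¹. -/
open MeasureTheory ProbabilityTheory

private lemma sort_comp_perm {n : ℕ} (𝔰 : Equiv.Perm (Fin n)) (y : Fin n → ℝ)
    (hy : Function.Injective y) :
    Tuple.sort (y ∘ 𝔰) = 𝔰⁻¹ * Tuple.sort y := by
  have h1 : Monotone ((y ∘ 𝔰) ∘ (Tuple.sort (y ∘ 𝔰))) := Tuple.monotone_sort _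
  have h2 : Monotone ((y ∘ 𝔰) ∘ ⇑(𝔰⁻¹ * Tuple.sort y)) := by
    have : (y ∘ 𝔰) ∘ ⇑(𝔰⁻¹ * Tuple.sort y) = y ∘ Tuple.sort y := by
      funext x; simp
    rw [this]; exact Tuple.monotone_sort _
  have := Tuple.unique_monotone h1 h2
  have hinj : Function.Injective (y ∘ 𝔰) := hy.comp 𝔰.injective
  exact Equiv.ext fun x => hinj (congrFun this x)

private lemma eq_prob_zero {Ω : Type*} [MeasurableSpace Ω] (μ : Measure Ω)
    [IsProbabilityMeasure μ]
    (n : ℕ) (U : Fin n → Ω → ℝ) (hmeas : ∀ i, Measurable (U i))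
    (hindep : iIndepFun U μ)
    (hlaw : ∀ i, Measure.map (U i) μ = volume.restrict (Set.Icc (0:ℝ) 1))
    (i j : Fin n) (hij : i ≠ j) : μ {ω | U i ω = U j ω} = 0 := by
  have hind : IndepFun (U i) (U j) μ := hindep.indepFun hij
  rw [ProbabilityTheory.indepFun_iff_map_prod_eq_prod_map_map (hmeas i).aemeasurable
    (hmeas j).aemeasurable] at hind
  have hm : Measurable (fun ω => (U i ω, U j ω)) := (hmeas i).prodMk (hmeas j)
  have hset : MeasurableSet {p : ℝ × ℝ | p.1 = p.2} :=
    measurableSet_eq_fun measurable_fst measurable_snd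
  have h : μ {ω | U i ω = U j ω}
      = (Measure.map (fun ω => (U i ω, U j ω)) μ) {p : ℝ × ℝ | p.1 = p.2} := by
    rw [Measure.map_apply hm hset]; rfl
  rw [h, hind, Measure.prod_apply hset, hlaw i, hlaw j]
  have h2 : ∀ x : ℝ,
      (volume.restrict (Set.Icc (0:ℝ) 1)) (Prod.mk x ⁻¹' {p : ℝ × ℝ | p.1 = p.2}) = 0 := by
    intro x
    have : Prod.mk x ⁻¹' {p : ℝ × ℝ | p.1 = p.2} = {x} := by ext y; simp [eq_comm]
    rw [this]; exact measure_singleton x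
  simp [h2]

/-- In the geometric construction `𝒫 = {(Uᵢ, U_{𝔰(i)})}` with i.i.d. uniform
`Uᵢ`, if `σ = st(U₁,…,Uₙ)` then almost surely `perm(𝒫) = σ ∘ 𝔰 ∘ σ⁻¹`. -/
theorem stmt3 {Ω : Type*} [MeasurableSpace Ω] (μ : Measure Ω) [IsProbabilityMeasure μ]
    (n : ℕ) (𝔰 : Equiv.Perm (Fin n))
    (U : Fin n → Ω → ℝ) (hmeas : ∀ i, Measurable (U i))
    (hindep : iIndepFun U μ)
    (hlaw : ∀ i, Measure.map (U i) μ = volume.restrict (Set.Icc (0:ℝ) 1)) :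
    ∀ᵐ ω ∂μ,
      permOfPoints (fun i => U i ω) (fun i => U (𝔰 i) ω)
        = stdz (fun i => U i ω) * 𝔰 * (stdz (fun i => U i ω))⁻¹ := by
  have hae : ∀ᵐ ω ∂μ, ∀ i j : Fin n, i ≠ j → U i ω ≠ U j ω := by
    rw [MeasureTheory.ae_all_iff]
    intro i
    rw [MeasureTheory.ae_all_iff]
    intro j
    by_cases hij : i = j
    · exact Filter.Eventually.of_forall fun ω h => absurd hij h
    · have h0 := eq_prob_zero μ n U hmeas hindep hlaw i j hij
      filter_upwards [measure_eq_zero_iff_ae_notMem.mp h0] with ω hω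
      exact fun _ => hω
  filter_upwards [hae] with ω hω
  have hy : Function.Injective (fun i => U i ω) := by
    intro i j h
    by_contra hij
    exact hω i j hij h
  have key := sort_comp_perm 𝔰 (fun i => U i ω) hy
  have hYeq : (fun i => U (𝔰 i) ω) = (fun i => U i ω) ∘ 𝔰 := rfl
  simp only [permOfPoints, stdz, hYeq, key]
  group
end

section
/- Let Ω ⊆ ℝ² be open and let u: Ω → ℝ be doubly increasing (u(x,y) ≤ u(x',y') whenever x≤x' and y≤y'). Define D(u) as the set of points (x,y) ∈ Ω such that u(x,y) ∈ ℤ and u(x',y') < u(x,y) for every (x',y') ∈ Ω\{(x,y)} with (x',y') ≤ (x,y). If u takes values in [0,r] then D(u) is an ⌊r⌋-decreasing set, i.e., D(u) is a union of at most ⌊r⌋ antichains of the coordinatewise partial order on ℝ² (equivalently, every chain in D(u) has at most ⌊r⌋ elements). -/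
/-- `Dset Ω u` : the set of points of `Ω` where `u` takes an integer value and which are
strict coordinatewise minima of their sublevel: `u q < u p` for all `q ∈ Ω`, `q ≤ p`, `q ≠ p`. -/
def Dset (Ω : Set (ℝ × ℝ)) (u : ℝ × ℝ → ℝ) : Set (ℝ × ℝ) :=
  {p | p ∈ Ω ∧ (∃ m : ℤ, u p = m) ∧ ∀ q ∈ Ω, q ≠ p → q ≤ p → u q < u p}

lemma Dset_one_le (Ω : Set (ℝ × ℝ)) (hΩ : IsOpen Ω) (u : ℝ × ℝ → ℝ)
    (hval : ∀ p ∈ Ω, 0 ≤ u p) {p : ℝ × ℝ} (hp : p ∈ Dset Ω u) : 1 ≤ u p := by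
  obtain ⟨hpΩ, ⟨m, hm⟩, hmin⟩ := hp
  obtain ⟨ε, hε, hball⟩ := Metric.isOpen_iff.mp hΩ p hpΩ
  set q : ℝ × ℝ := (p.1 - ε/2, p.2 - ε/2) with hq
  have hqball : q ∈ Metric.ball p ε := by
    have : dist q p = ε/2 := by
      simp [Prod.dist_eq, hq, Real.dist_eq, abs_of_nonneg (le_of_lt (half_pos hε))]
      exact le_of_lt hε
    rw [Metric.mem_ball, this]; linarith
  have hqΩ : q ∈ Ω := hball hqball
  have hqne : q ≠ p := by
    intro h
    have := congrArg Prod.fst h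
    simp only [hq] at this
    linarith
  have hqle : q ≤ p := by
    constructor <;> simp [hq] <;> linarith
  have h1 : u q < u p := hmin q hqΩ hqne hqle
  have h2 : 0 ≤ u q := hval q hqΩ
  have hpos : 0 < u p := lt_of_le_of_lt h2 h1
  have hmpos : (0 : ℝ) < m := hm ▸ hpos
  have : (1 : ℤ) ≤ m := by exact_mod_cast hmpos
  rw [hm]; exact_mod_cast this

/-- If `u` is doubly increasing on an open `Ω ⊆ ℝ²` with values in `[0,r]`,
then `D(u)` is `⌊r⌋`-decreasing: every chain in `D(u)` has at most `⌊r⌋` elements, and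
`D(u)` is a union of at most `⌊r⌋` antichains. -/
theorem stmt7 (Ω : Set (ℝ × ℝ)) (hΩ : IsOpen Ω) (u : ℝ × ℝ → ℝ)
    (hmono : ∀ p ∈ Ω, ∀ q ∈ Ω, p ≤ q → u p ≤ u q)
    (r : ℝ) (hr : 0 ≤ r) (hval : ∀ p ∈ Ω, u p ∈ Set.Icc 0 r) :
    (∀ s : Finset (ℝ × ℝ), ↑s ⊆ Dset Ω u → IsChain (· ≤ ·) (↑s : Set (ℝ × ℝ)) →
      s.card ≤ ⌊r⌋₊) ∧
    ∃ A : Fin ⌊r⌋₊ → Set (ℝ × ℝ),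
      (∀ i, IsAntichain (· ≤ ·) (A i)) ∧ Dset Ω u = ⋃ i, A i := by
  have hval0 : ∀ p ∈ Ω, 0 ≤ u p := fun p hp => (hval p hp).1
  -- strict monotonicity on Dset
  have hstrict : ∀ p ∈ Dset Ω u, ∀ q ∈ Dset Ω u, p ≤ q → p ≠ q → u p < u q := by
    intro p hp q hq hle hne
    exact hq.2.2 p hp.1 hne hle
  -- floor values lie in Icc 1 ⌊r⌋₊ and determine u on Dset
  have hfloor : ∀ p ∈ Dset Ω u, (⌊u p⌋₊ : ℝ) = u p ∧ 1 ≤ ⌊u p⌋₊ ∧ ⌊u p⌋₊ ≤ ⌊r⌋₊ := by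
    intro p hp
    obtain ⟨m, hm⟩ := hp.2.1
    have h1 : 1 ≤ u p := Dset_one_le Ω hΩ u hval0 hp
    have hm1 : (1 : ℤ) ≤ m := by exact_mod_cast hm ▸ h1
    have hfl : (⌊u p⌋₊ : ℝ) = u p := by
      have hup : u p = ((m.toNat : ℕ) : ℝ) := by
        rw [hm]; exact_mod_cast (Int.toNat_of_nonneg (by omega)).symm
      rw [hup, Nat.floor_natCast]
    refine ⟨hfl, ?_, ?_⟩
    · exact Nat.le_floor (α := ℝ) (by exact_mod_cast h1)
    · exact Nat.floor_le_floor ((hval p hp.1).2)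
  constructor
  · intro s hs hchain
    have : s.card ≤ (Finset.Icc 1 ⌊r⌋₊).card := by
      apply Finset.card_le_card_of_injOn (fun p => ⌊u p⌋₊)
      · intro p hp
        obtain ⟨_, h1, h2⟩ := hfloor p (hs hp)
        rw [Finset.mem_coe, Finset.mem_Icc]; exact ⟨h1, h2⟩
      · intro p hp q hq hfeq
        by_contra hne
        have hpD := hs hp
        have hqD := hs hq
        have hu : u p = u q := by
          rw [← (hfloor p hpD).1, ← (hfloor q hqD).1]
          exact_mod_cast hfeq
        rcases hchain hp hq hne with h | h
        · exact absurd hu (ne_of_lt (hstrict p hpD q hqD h hne))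
        · exact absurd hu.symm (ne_of_lt (hstrict q hqD p hpD h (Ne.symm hne)))
    simpa using this
  · refine ⟨fun i => {p ∈ Dset Ω u | u p = (i : ℕ) + 1}, ?_, ?_⟩
    · intro i p hp q hq hne hle
      exact absurd (hp.2.trans hq.2.symm) (ne_of_lt (hstrict p hp.1 q hq.1 hle hne))
    · ext p
      simp only [Set.mem_iUnion, Set.mem_setOf_eq, Set.mem_sep_iff]
      constructor
      · intro hp
        obtain ⟨hfl, h1, h2⟩ := hfloor p hp
        refine ⟨⟨⌊u p⌋₊ - 1, by omega⟩, hp, ?_⟩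
        simp only [Fin.val_mk]
        conv_lhs => rw [← hfl]
        norm_cast
        omega
      · rintro ⟨i, hp, _⟩; exact hp
end

section
/- Let Ω ⊆ ℝ² be open and P ⊂ Ω a finite k-decreasing set (union of k antichains). Define κ_P(x,y) as the maximal length of a chain in P ∩ ((−∞,x]×(−∞,y]). Then κ_P is doubly increasing on Ω, takes values in {0,1,…,k}, and D(κ_P) = P, where D(u) is the set of strict coordinatewise-minimal points of the integer level sets of u. -/
/-- `kappa P p` : the maximal length of a chain of `P` contained in `(−∞,p.1] × (−∞,p.2]`. -/
noncomputable def kappa (P : Finset (ℝ × ℝ)) (p : ℝ × ℝ) : ℕ :=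
  sSup {m | ∃ s : Finset (ℝ × ℝ), s ⊆ P ∧ (∀ q ∈ s, q ≤ p) ∧
    IsChain (· ≤ ·) (↑s : Set (ℝ × ℝ)) ∧ s.card = m}

private lemma kappa_bddAbove (P : Finset (ℝ × ℝ)) (p : ℝ × ℝ) :
    BddAbove {m | ∃ s : Finset (ℝ × ℝ), s ⊆ P ∧ (∀ q ∈ s, q ≤ p) ∧
      IsChain (· ≤ ·) (↑s : Set (ℝ × ℝ)) ∧ s.card = m} := by
  refine ⟨P.card, ?_⟩
  rintro m ⟨s, hs, -, -, rfl⟩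
  exact Finset.card_le_card hs

private lemma kappa_nonempty (P : Finset (ℝ × ℝ)) (p : ℝ × ℝ) :
    {m | ∃ s : Finset (ℝ × ℝ), s ⊆ P ∧ (∀ q ∈ s, q ≤ p) ∧
      IsChain (· ≤ ·) (↑s : Set (ℝ × ℝ)) ∧ s.card = m}.Nonempty :=
  ⟨0, ∅, by simp, by simp, by simp, rfl⟩

private lemma le_kappa (P : Finset (ℝ × ℝ)) (p : ℝ × ℝ) (s : Finset (ℝ × ℝ))
    (h1 : s ⊆ P) (h2 : ∀ q ∈ s, q ≤ p) (h3 : IsChain (· ≤ ·) (↑s : Set (ℝ × ℝ))) :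
    s.card ≤ kappa P p :=
  le_csSup (kappa_bddAbove P p) ⟨s, h1, h2, h3, rfl⟩

private lemma kappa_spec (P : Finset (ℝ × ℝ)) (p : ℝ × ℝ) :
    ∃ s : Finset (ℝ × ℝ), s ⊆ P ∧ (∀ q ∈ s, q ≤ p) ∧
      IsChain (· ≤ ·) (↑s : Set (ℝ × ℝ)) ∧ s.card = kappa P p :=
  Nat.sSup_mem (kappa_nonempty P p) (kappa_bddAbove P p)

/-- For a finite `k`-decreasing set `P ⊆ Ω` (union of `k` antichains),
`κ_P` is doubly increasing on `Ω`, takes values in `{0,…,k}`, and `D(κ_P) = P`. -/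
theorem stmt8 (Ω : Set (ℝ × ℝ)) (hΩ : IsOpen Ω) (k : ℕ)
    (P : Finset (ℝ × ℝ)) (hP : ↑P ⊆ Ω)
    (hdec : ∃ A : Fin k → Set (ℝ × ℝ),
      (∀ i, IsAntichain (· ≤ ·) (A i)) ∧ ↑P = ⋃ i, A i) :
    (∀ p ∈ Ω, ∀ q ∈ Ω, p ≤ q → kappa P p ≤ kappa P q) ∧
    (∀ p ∈ Ω, kappa P p ≤ k) ∧
    Dset Ω (fun p => (kappa P p : ℝ)) = ↑P := by
  obtain ⟨A, hA, hPA⟩ := hdec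
  refine ⟨?_, ?_, ?_⟩
  · -- monotonicity
    intro p _ q _ hpq
    obtain ⟨s, h1, h2, h3, h4⟩ := kappa_spec P p
    rw [← h4]
    exact le_kappa P q s h1 (fun r hr => le_trans (h2 r hr) hpq) h3
  · -- bounded by k
    intro p _
    obtain ⟨s, h1, h2, h3, h4⟩ := kappa_spec P p
    rw [← h4]
    rcases s.eq_empty_or_nonempty with rfl | ⟨q0, hq0⟩
    · simp
    have hmem : ∀ q ∈ s, ∃ i, q ∈ A i := by
      intro q hq
      have : (q : ℝ × ℝ) ∈ (↑P : Set (ℝ × ℝ)) := h1 hq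
      rw [hPA] at this
      exact Set.mem_iUnion.mp this
    have : Nonempty (Fin k) := ⟨(hmem q0 hq0).choose⟩
    classical
    set f : ℝ × ℝ → Fin k := fun q =>
      if h : ∃ i, q ∈ A i then h.choose else Classical.arbitrary _ with hf
    have hfmem : ∀ q ∈ s, q ∈ A (f q) := by
      intro q hq
      have h := hmem q hq
      simp only [hf, dif_pos h]
      exact h.choose_spec
    have hinj : Set.InjOn f ↑s := by
      intro a ha b hb hab
      by_contra hne
      have hcomp := h3 ha hb hne
      have ha' := hfmem a ha
      have hb' := hfmem b hb
      rw [hab] at ha'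
      rcases hcomp with h | h
      · exact hA (f b) ha' hb' hne h
      · exact hA (f b) hb' ha' (Ne.symm hne) h
    calc s.card ≤ (Finset.univ : Finset (Fin k)).card :=
          Finset.card_le_card_of_injOn f (fun a _ => Finset.mem_univ _) hinj
      _ = k := by simp
  · -- Dset = P
    ext p
    constructor
    · rintro ⟨hpΩ, -, hmin⟩
      by_contra hpP
      obtain ⟨s, h1, h2, h3, h4⟩ := kappa_spec P p
      rcases s.eq_empty_or_nonempty with rfl | hs
      · -- kappa P p = 0 : find a smaller point of Ω, contradiction
        rw [Metric.isOpen_iff] at hΩ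
        obtain ⟨ε, hε, hball⟩ := hΩ p hpΩ
        set q : ℝ × ℝ := (p.1 - ε/2, p.2 - ε/2) with hq
        have hqΩ : q ∈ Ω := by
          apply hball
          rw [Metric.mem_ball, Prod.dist_eq]
          have : dist (p.1 - ε/2) p.1 = ε/2 := by
            rw [Real.dist_eq]; rw [abs_of_nonpos] <;> linarith
          have h2' : dist (p.2 - ε/2) p.2 = ε/2 := by
            rw [Real.dist_eq]; rw [abs_of_nonpos] <;> linarith
          simp only [hq, this, h2']
          rw [max_self]; linarith
        have hqne : q ≠ p := by
          intro h
          have := congrArg Prod.fst h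
          simp [hq] at this
          linarith
        have hqle : q ≤ p := ⟨by simp [hq]; linarith, by simp [hq]; linarith⟩
        have := hmin q hqΩ hqne hqle
        simp only at this
        have h0 : kappa P p = 0 := by rw [← h4]; simp
        rw [h0] at this
        rw [Nat.cast_lt] at this; omega
      · -- take a maximal element r of the chain s
        obtain ⟨r, hrs, hrmax⟩ := s.exists_maximal hs
        have hrtop : ∀ b ∈ s, b ≤ r := by
          intro b hb
          by_cases hbe : b = r
          · exact hbe.le
          · rcases h3 hb hrs hbe with h | h
            · exact h
            · exact hrmax hb h
        have hrP : r ∈ P := h1 hrs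
        have hrΩ : r ∈ Ω := hP hrP
        have hrne : r ≠ p := fun h => hpP (h ▸ hrP)
        have hlt := hmin r hrΩ hrne (h2 r hrs)
        have hge : kappa P p ≤ kappa P r := by
          rw [← h4]; exact le_kappa P r s h1 hrtop h3
        have : (kappa P p : ℝ) ≤ (kappa P r : ℝ) := by exact_mod_cast hge
        simp only at hlt
        linarith
    · intro hpP
      have hpP' : p ∈ P := hpP
      refine ⟨hP hpP, ⟨kappa P p, by push_cast; ring⟩, ?_⟩
      intro q hqΩ hqne hqle
      simp only
      rw [Nat.cast_lt]
      obtain ⟨s, h1, h2, h3, h4⟩ := kappa_spec P q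
      have hps : p ∉ s := by
        intro h
        exact hqne (le_antisymm hqle (h2 p h))
      have hcard : (insert p s).card = kappa P q + 1 := by
        rw [Finset.card_insert_of_notMem hps, h4]
      have hle : (insert p s).card ≤ kappa P p := by
        apply le_kappa
        · intro r hr
          rcases Finset.mem_insert.mp hr with rfl | hr
          · exact hpP'
          · exact h1 hr
        · intro r hr
          rcases Finset.mem_insert.mp hr with rfl | hr
          · exact le_rfl
          · exact le_trans (h2 r hr) hqle
        · rw [Finset.coe_insert]
          exact h3.insert (fun b hb _ => Or.inr (le_trans (h2 b hb) hqle))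
      omega
end

section
/- Let 𝒫 be a finite subset of an open set Ω ⊆ ℝ² with pairwise distinct coordinates, and let k ∈ ℕ. Then the maximal number of points of 𝒫 contained in a k-decreasing subset of Ω equals the maximum over doubly increasing functions w: Ω → [0,k] of |D(w) ∩ 𝒫|. -/
open Classical in
noncomputable def hfun (T : Finset (ℝ × ℝ)) (p : ℝ × ℝ) : ℕ :=
  ((T.powerset).filter (fun (C : Finset (ℝ × ℝ)) => IsChain (· ≤ ·) (↑C : Set (ℝ × ℝ)) ∧ ∀ x ∈ C, x ≤ p)).sup
    Finset.card

open Classical in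
lemma hfun_mono (T : Finset (ℝ × ℝ)) {p q : ℝ × ℝ} (h : p ≤ q) : hfun T p ≤ hfun T q := by
  apply Finset.sup_mono
  intro C hC
  simp only [Finset.mem_filter, Finset.mem_powerset] at hC ⊢
  exact ⟨hC.1, hC.2.1, fun x hx => le_trans (hC.2.2 x hx) h⟩

open Classical in
lemma hfun_le (T : Finset (ℝ × ℝ)) (k : ℕ)
    (hk : ∀ C : Finset (ℝ × ℝ), C ⊆ T → IsChain (· ≤ ·) (↑C : Set (ℝ × ℝ)) → C.card ≤ k)
    (p : ℝ × ℝ) : hfun T p ≤ k := by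
  apply Finset.sup_le
  intro C hC
  simp only [Finset.mem_filter, Finset.mem_powerset] at hC
  exact hk C hC.1 hC.2.1

open Classical in
lemma hfun_lt {T : Finset (ℝ × ℝ)} {p q : ℝ × ℝ} (hp : p ∈ T) (hq : q ≤ p) (hne : q ≠ p) :
    hfun T q < hfun T p := by
  have hne' : (Finset.filter (fun (C : Finset (ℝ × ℝ)) => IsChain (· ≤ ·) (↑C : Set (ℝ × ℝ)) ∧ ∀ x ∈ C, x ≤ q)
      T.powerset).Nonempty := by
    refine ⟨∅, ?_⟩
    simp [Finset.empty_mem_powerset, Set.pairwise_empty, IsChain]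
  obtain ⟨C, hC, hsup⟩ := Finset.exists_mem_eq_sup _ hne' Finset.card
  simp only [Finset.mem_filter, Finset.mem_powerset] at hC
  obtain ⟨hCT, hCchain, hCle⟩ := hC
  have hpC : p ∉ C := by
    intro h
    exact hne (le_antisymm hq (hCle p h))
  have hchain' : IsChain (· ≤ ·) (↑(insert p C) : Set (ℝ × ℝ)) := by
    rw [Finset.coe_insert]
    exact hCchain.insert (fun b hb _ => Or.inr (le_trans (hCle b hb) hq))
  have hmem : insert p C ∈ (Finset.filter
      (fun (C : Finset (ℝ × ℝ)) => IsChain (· ≤ ·) (↑C : Set (ℝ × ℝ)) ∧ ∀ x ∈ C, x ≤ p) T.powerset) := by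
    simp only [Finset.mem_filter, Finset.mem_powerset]
    exact ⟨Finset.insert_subset hp hCT, hchain',
      fun x hx => by
        rcases Finset.mem_insert.1 hx with h | h
        · exact h ▸ le_refl p
        · exact le_trans (hCle x h) hq⟩
  calc hfun T q = C.card := hsup
    _ < (insert p C).card := by rw [Finset.card_insert_of_notMem hpC]; omega
    _ ≤ hfun T p := Finset.le_sup hmem

open Classical in
lemma hfun_pos {T : Finset (ℝ × ℝ)} {p : ℝ × ℝ} (hp : p ∈ T) : 1 ≤ hfun T p := by
  have hmem : {p} ∈ (Finset.filter
      (fun (C : Finset (ℝ × ℝ)) => IsChain (· ≤ ·) (↑C : Set (ℝ × ℝ)) ∧ ∀ x ∈ C, x ≤ p) T.powerset) := by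
    simp only [Finset.mem_filter, Finset.mem_powerset]
    refine ⟨Finset.singleton_subset_iff.2 hp, ?_, fun x hx => ?_⟩
    · simp [Set.Subsingleton.isChain, Set.subsingleton_singleton]
    · simp at hx; exact hx ▸ le_refl p
  have := Finset.le_sup (f := Finset.card) hmem
  simp only [Finset.card_singleton] at this
  unfold hfun
  convert this

lemma exists_lt_mem {Ω : Set (ℝ × ℝ)} (hΩ : IsOpen Ω) {p : ℝ × ℝ} (hp : p ∈ Ω) :
    ∃ q ∈ Ω, q ≤ p ∧ q ≠ p := by
  obtain ⟨ε, hε, hb⟩ := Metric.isOpen_iff.1 hΩ p hp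
  refine ⟨(p.1 - ε / 2, p.2 - ε / 2), hb ?_, ⟨by simp; linarith, by simp; linarith⟩, ?_⟩
  · simp only [Metric.mem_ball, Prod.dist_eq, Real.dist_eq]
    rw [max_lt_iff]
    constructor <;> (rw [show ∀ a : ℝ, a - ε/2 - a = -(ε/2) by intro a; ring]; rw [abs_neg, abs_of_pos (by linarith)]; linarith)
  · intro h
    have := congrArg Prod.fst h
    simp at this
    linarith
/-- For a finite point set `𝒫 ⊆ Ω` with pairwise distinct coordinates, the
maximal number of points of `𝒫` contained in a `k`-decreasing subset of `Ω` (a union of at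
most `k` antichains) equals the maximum over doubly increasing `w : Ω → [0,k]` of
`|D(w) ∩ 𝒫|`. -/
theorem stmt9 (Ω : Set (ℝ × ℝ)) (hΩ : IsOpen Ω) (P : Finset (ℝ × ℝ)) (hP : ↑P ⊆ Ω)
    (hcoord : ∀ p ∈ P, ∀ q ∈ P, p ≠ q → p.1 ≠ q.1 ∧ p.2 ≠ q.2) (k : ℕ) :
    sSup {m : ℕ | ∃ S : Set (ℝ × ℝ), S ⊆ Ω ∧
        (∃ A : Fin k → Set (ℝ × ℝ), (∀ i, IsAntichain (· ≤ ·) (A i)) ∧ S = ⋃ i, A i) ∧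
        (↑P ∩ S).ncard = m}
      = sSup {m : ℕ | ∃ w : ℝ × ℝ → ℝ,
        (∀ p ∈ Ω, w p ∈ Set.Icc 0 (k : ℝ)) ∧
        (∀ p ∈ Ω, ∀ q ∈ Ω, p ≤ q → w p ≤ w q) ∧
        (↑P ∩ Dset Ω w).ncard = m} := by
  classical
  set L := {m : ℕ | ∃ S : Set (ℝ × ℝ), S ⊆ Ω ∧
        (∃ A : Fin k → Set (ℝ × ℝ), (∀ i, IsAntichain (· ≤ ·) (A i)) ∧ S = ⋃ i, A i) ∧
        (↑P ∩ S).ncard = m} with hL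
  set R := {m : ℕ | ∃ w : ℝ × ℝ → ℝ,
        (∀ p ∈ Ω, w p ∈ Set.Icc 0 (k : ℝ)) ∧
        (∀ p ∈ Ω, ∀ q ∈ Ω, p ≤ q → w p ≤ w q) ∧
        (↑P ∩ Dset Ω w).ncard = m} with hR
  have hLne : L.Nonempty := by
    refine ⟨(↑P ∩ (∅ : Set (ℝ × ℝ))).ncard, ∅, Set.empty_subset _,
      ⟨fun _ => ∅, fun i => Set.pairwise_empty _, by simp⟩, rfl⟩
  have hRne : R.Nonempty :=
    ⟨(↑P ∩ Dset Ω 0).ncard, 0, fun p _ => ⟨le_refl _, by positivity⟩,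
      fun _ _ _ _ _ => le_refl _, rfl⟩
  have hLbdd : BddAbove L := by
    refine ⟨P.card, fun m hm => ?_⟩
    obtain ⟨S, _, _, hm⟩ := hm
    rw [← hm, ← Set.ncard_coe_finset P]
    exact Set.ncard_le_ncard Set.inter_subset_left P.finite_toSet
  have hRbdd : BddAbove R := by
    refine ⟨P.card, fun m hm => ?_⟩
    obtain ⟨w, _, _, hm⟩ := hm
    rw [← hm, ← Set.ncard_coe_finset P]
    exact Set.ncard_le_ncard Set.inter_subset_left P.finite_toSet
  apply le_antisymm
  · -- L ≤ R direction
    apply csSup_le hLne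
    intro m hm
    obtain ⟨S, hSΩ, ⟨A, hA, hSA⟩, hmcard⟩ := hm
    set T : Finset (ℝ × ℝ) := P.filter (· ∈ S) with hT
    have hTcoe : (↑T : Set (ℝ × ℝ)) = ↑P ∩ S := by
      ext x; simp [hT, Set.mem_inter_iff]
    -- chains in T have card ≤ k
    have hchains : ∀ C : Finset (ℝ × ℝ), C ⊆ T → IsChain (· ≤ ·) (↑C : Set (ℝ × ℝ)) →
        C.card ≤ k := by
      intro C hCT hCchain
      have hCS : ∀ x ∈ C, ∃ i : Fin k, x ∈ A i := by
        intro x hx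
        have : x ∈ S := (Finset.mem_filter.1 (hCT hx)).2
        rw [hSA] at this
        exact Set.mem_iUnion.1 this
      choose f hf using hCS
      rcases C.eq_empty_or_nonempty with rfl | ⟨x0, hx0⟩
      · simp
      have : C.card ≤ (Finset.univ : Finset (Fin k)).card := by
        apply Finset.card_le_card_of_injOn (fun x => if hx : x ∈ C then f x hx else f x0 hx0)
          (fun _ _ => Finset.mem_univ _)
        intro x hx y hy hxy
        simp only [Finset.mem_coe] at hx hy
        simp only [dif_pos hx, dif_pos hy] at hxy
        by_contra hne
        have hcomp := hCchain hx hy hne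
        rcases hcomp with h | h
        · exact hA (f y hy) (hxy ▸ hf x hx) (hf y hy) hne h
        · exact hA (f y hy) (hf y hy) (hxy ▸ hf x hx) (Ne.symm hne) h
      simpa using this
    set w : ℝ × ℝ → ℝ := fun p => (hfun T p : ℝ) with hw
    have hm' : (↑P ∩ Dset Ω w).ncard ∈ R := by
      refine ⟨w, fun p _ => ⟨by rw [hw]; positivity, ?_⟩,
        fun p _ q _ hpq => ?_, rfl⟩
      · show (hfun T p : ℝ) ≤ k
        exact_mod_cast hfun_le T k hchains p
      · show (hfun T p : ℝ) ≤ (hfun T q : ℝ)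
        exact_mod_cast hfun_mono T hpq
    have hsub : (↑T : Set (ℝ × ℝ)) ⊆ ↑P ∩ Dset Ω w := by
      intro p hp
      simp only [Finset.mem_coe, hT, Finset.mem_filter] at hp
      refine ⟨hp.1, hP hp.1, ⟨hfun T p, rfl⟩, ?_⟩
      intro q hq hqne hqle
      have h2 : hfun T q < hfun T p := hfun_lt (by simp [hT, hp.1, hp.2]) hqle hqne
      show (hfun T q : ℝ) < (hfun T p : ℝ)
      exact_mod_cast h2
    have hle : m ≤ (↑P ∩ Dset Ω w).ncard := by
      rw [← hmcard, ← hTcoe]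
      exact Set.ncard_le_ncard hsub (Set.Finite.subset P.finite_toSet Set.inter_subset_left)
    exact le_trans hle (le_csSup hRbdd hm')
  · -- R ≤ L direction
    apply csSup_le hRne
    intro m hm
    obtain ⟨w, hwbd, hwmono, hmcard⟩ := hm
    set T : Finset (ℝ × ℝ) := P.filter (· ∈ Dset Ω w) with hT
    have hTcoe : (↑T : Set (ℝ × ℝ)) = ↑P ∩ Dset Ω w := by
      ext x; simp [hT, Set.mem_inter_iff]
    -- w values on Dset points are integers in [1, k]
    have hval : ∀ p ∈ T, ∃ m : ℤ, w p = m ∧ 1 ≤ m ∧ m ≤ k := by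
      intro p hp
      simp only [hT, Finset.mem_filter] at hp
      obtain ⟨hpP, hpΩ, ⟨n, hn⟩, hmin⟩ := hp
      refine ⟨n, hn, ?_, ?_⟩
      · obtain ⟨q, hqΩ, hqle, hqne⟩ := exists_lt_mem hΩ hpΩ
        have h1 : w q < w p := hmin q hqΩ hqne hqle
        have h2 : (0 : ℝ) ≤ w q := (hwbd q hqΩ).1
        have : (0 : ℝ) < n := by rw [← hn]; linarith
        exact_mod_cast this
      · have := (hwbd p hpΩ).2
        rw [hn] at this
        exact_mod_cast this
    -- chains in T have card ≤ k
    have hchains : ∀ C : Finset (ℝ × ℝ), C ⊆ T → IsChain (· ≤ ·) (↑C : Set (ℝ × ℝ)) →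
        C.card ≤ k := by
      intro C hCT hCchain
      have : C.card ≤ (Finset.Icc (1 : ℤ) k).card := by
        apply Finset.card_le_card_of_injOn (fun p => ⌊w p⌋)
        · intro p hp
          obtain ⟨n, hn, h1, h2⟩ := hval p (hCT hp)
          simp only [Finset.mem_coe, Finset.mem_Icc]
          rw [hn, Int.floor_intCast]
          exact ⟨h1, h2⟩
        · intro p hp q hq hpq
          simp only [Finset.mem_coe] at hp hq
          by_contra hne
          have hlt : ∀ a b : ℝ × ℝ, a ∈ C → b ∈ C → a ≤ b → a ≠ b → w a < w b := by
            intro a b ha hb hab hne'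
            have hbD : b ∈ Dset Ω w := (Finset.mem_filter.1 (hCT hb)).2
            exact hbD.2.2 a (hP (Finset.mem_filter.1 (hCT ha)).1) hne' hab
          obtain ⟨n, hn, _, _⟩ := hval p (hCT hp)
          obtain ⟨n', hn', _, _⟩ := hval q (hCT hq)
          simp only [hn, hn', Int.floor_intCast] at hpq
          rcases hCchain hp hq hne with h | h
          · have h3 := hlt p q hp hq h hne
            rw [hn, hn'] at h3
            have : n < n' := by exact_mod_cast h3
            omega
          · have h3 := hlt q p hq hp h (Ne.symm hne)
            rw [hn, hn'] at h3
            have : n' < n := by exact_mod_cast h3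
            omega
      simpa [Int.card_Icc] using this
    -- build the antichain decomposition via hfun
    have hm' : m ∈ L := by
      refine ⟨↑T, ?_, ⟨fun i => {p | p ∈ (↑T : Set (ℝ × ℝ)) ∧ hfun T p = i + 1}, ?_, ?_⟩, ?_⟩
      · intro p hp
        simp only [Finset.mem_coe, hT, Finset.mem_filter] at hp
        exact hP hp.1
      · intro i p hp q hq hne hle
        have h1 : hfun T p < hfun T q := hfun_lt (Finset.mem_coe.1 hq.1) hle hne
        have e1 := hp.2
        have e2 := hq.2
        omega
      · ext p
        simp only [Set.mem_iUnion, Set.mem_setOf_eq, Finset.mem_coe]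
        constructor
        · intro hp
          have h1 := hfun_pos hp
          have h2 := hfun_le T k hchains p
          exact ⟨⟨hfun T p - 1, by omega⟩, hp, by simp; omega⟩
        · rintro ⟨i, hp, _⟩
          exact hp
      · rw [hTcoe, Set.inter_eq_self_of_subset_right Set.inter_subset_left, hmcard]
    exact le_csSup hLbdd hm'
end

section
/- Let 0 < ι < 1/2, let P be a (u,ι)-parallelogram with center (x_P,y_P), scale c_P and slopes ũ_x, ũ_y, and let P' be the open parallelogram obtained by shrinking P by a factor 1−2ι in both defining inequalities. If (x₁,y₁) ≤ (x₂,y₂) coordinatewise, (x₁,y₁) ∈ P', and (x₂,y₂) lies on the boundary of P, then (x₂,y₂) lies on the northeast boundary: ũ_x(x₂−x_P) + ũ_y(y₂−y_P) = ι c_P. -/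
/-!
In the rotated coordinates `s = ux(x−xP) + uy(y−yP)` and `d = ux(x−xP) − uy(y−yP)`, a
coordinatewise increase of `(x, y)` changes `d` by at most the increase of `s`. Starting in `P'`,
`s` can increase by less than `ιc + (1−2ι)ιc`, so `|d|` stays below `c − 2ι²c < c`; and `s` cannot
decrease, so it never reaches `−ιc`. The only boundary piece of `P` within reach is `s = ιc`.
-/

lemma abs_sub_sub_le_add_sub_add {ux uy x₁ y₁ x₂ y₂ : ℝ} (hux : 0 ≤ ux) (huy : 0 ≤ uy)
    (hx : x₁ ≤ x₂) (hy : y₁ ≤ y₂) :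
    |(ux * x₂ - uy * y₂) - (ux * x₁ - uy * y₁)| ≤ (ux * x₂ + uy * y₂) - (ux * x₁ + uy * y₁) := by
  have ha : 0 ≤ ux * (x₂ - x₁) := mul_nonneg hux (sub_nonneg.mpr hx)
  have hb : 0 ≤ uy * (y₂ - y₁) := mul_nonneg huy (sub_nonneg.mpr hy)
  rw [abs_le]
  constructor <;> nlinarith

section ShrunkParallelogram

variable {ι c s₁ d₁ s₂ d₂ : ℝ}

lemma neg_lt_of_shrunk (hι : 0 < ι) (hc : 0 < c) (hmove : |d₂ - d₁| ≤ s₂ - s₁)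
    (hs₁ : |s₁| < (1 - 2 * ι) * ι * c) : -(ι * c) < s₂ := by
  have hs₁s₂ : s₁ ≤ s₂ := sub_nonneg.mp ((abs_nonneg _).trans hmove)
  have : 0 < ι * ι * c := by positivity
  linarith [neg_abs_le s₁]

lemma abs_lt_of_shrunk (hι : 0 < ι) (hc : 0 < c) (hmove : |d₂ - d₁| ≤ s₂ - s₁)
    (hs₁ : |s₁| < (1 - 2 * ι) * ι * c) (hd₁ : |d₁| < (1 - 2 * ι) * c) (hs₂ : s₂ ≤ ι * c) :
    |d₂| < c := by
  have : 0 < ι * ι * c := by positivity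
  calc |d₂| ≤ |d₁| + |d₂ - d₁| := by linarith [abs_sub_abs_le_abs_sub d₂ d₁]
    _ < (1 - 2 * ι) * c + (ι * c + (1 - 2 * ι) * ι * c) := by linarith [neg_abs_le s₁]
    _ = c - 2 * (ι * ι * c) := by ring
    _ < c := by linarith

end ShrunkParallelogram

theorem stmt11_general (ι c ux uy xP yP x1 y1 x2 y2 : ℝ)
    (hι : 0 < ι) (hc : 0 < c) (hux : 0 < ux) (huy : 0 < uy)
    (hP'1 : |ux * (x1 - xP) + uy * (y1 - yP)| < (1 - 2*ι) * ι * c)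
    (hP'2 : |ux * (x1 - xP) - uy * (y1 - yP)| < (1 - 2*ι) * c)
    (hx : x1 ≤ x2) (hy : y1 ≤ y2)
    (hmem1 : |ux * (x2 - xP) + uy * (y2 - yP)| ≤ ι * c)
    (hbound : |ux * (x2 - xP) + uy * (y2 - yP)| = ι * c ∨
      |ux * (x2 - xP) - uy * (y2 - yP)| = c) :
    ux * (x2 - xP) + uy * (y2 - yP) = ι * c := by
  have hmove := abs_sub_sub_le_add_sub_add hux.le huy.le
    (sub_le_sub_right hx xP) (sub_le_sub_right hy yP)
  have hs₂ := (abs_le.mp hmem1).2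
  rcases hbound with hs | hd
  · rcases (abs_eq (by positivity)).mp hs with h | h
    · exact h
    · exact absurd h (neg_lt_of_shrunk hι hc hmove hP'1).ne'
  · exact absurd hd (abs_lt_of_shrunk hι hc hmove hP'1 hP'2 hs₂).ne

/-- Let `P` be a `(u,ι)`-parallelogram and `P'` its shrinking by the factor
`1 − 2ι` in both defining inequalities. If `(x₁,y₁) ≤ (x₂,y₂)` coordinatewise, `(x₁,y₁) ∈ P'`
and `(x₂,y₂)` lies on the boundary of `P`, then `(x₂,y₂)` lies on the northeast boundary:
`ux(x₂−xP) + uy(y₂−yP) = ι·c`. -/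
theorem stmt11 (ι c ux uy xP yP x1 y1 x2 y2 : ℝ)
    (hι : 0 < ι) (hι2 : ι < 1/2) (hc : 0 < c) (hux : 0 < ux) (huy : 0 < uy)
    (hP'1 : |ux * (x1 - xP) + uy * (y1 - yP)| < (1 - 2*ι) * ι * c)
    (hP'2 : |ux * (x1 - xP) - uy * (y1 - yP)| < (1 - 2*ι) * c)
    (hx : x1 ≤ x2) (hy : y1 ≤ y2)
    (hmem1 : |ux * (x2 - xP) + uy * (y2 - yP)| ≤ ι * c)
    (hmem2 : |ux * (x2 - xP) - uy * (y2 - yP)| ≤ c)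
    (hbound : |ux * (x2 - xP) + uy * (y2 - yP)| = ι * c ∨
      |ux * (x2 - xP) - uy * (y2 - yP)| = c) :
    ux * (x2 - xP) + uy * (y2 - yP) = ι * c :=
  stmt11_general ι c ux uy xP yP x1 y1 x2 y2 hι hc hux huy hP'1 hP'2 hx hy hmem1 hbound
end

section
/- Let t be a cycle type of size n with t₁ = 0 (no fixed points) and let 𝒫 = {(U_i, U_{𝔰(i)}) : i ∈ 𝒱_t} be its geometric construction. Then 𝒫 can be partitioned into three subsets 𝒫⁽¹⁾, 𝒫⁽²⁾, 𝒫⁽³⁾ of deterministic sizes n₁,n₂,n₃ each within 1 of n/3, such that each 𝒫⁽ⁱ⁾ is a family of i.i.d. points uniformly distributed in [0,1]². -/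
open MeasureTheory ProbabilityTheory

section AuxColoring

open Finset Equiv Equiv.Perm


/-- color pattern on a cycle of length `L`. -/
def gcol (L k : ℕ) : Fin 3 :=
  if k + 1 = L ∧ L % 3 = 1 then ⟨1, by norm_num⟩ else ⟨k % 3, Nat.mod_lt _ (by norm_num)⟩

lemma gcol_step {L k : ℕ} (hL : 2 ≤ L) (hk : k < L) : gcol L ((k + 1) % L) ≠ gcol L k := by
  rcases Nat.lt_or_ge (k + 1) L with hkL | hkL
  · rw [Nat.mod_eq_of_lt hkL]
    simp only [gcol]
    split_ifs with h1 h2 h2 <;> simp only [Ne, Fin.mk.injEq, Fin.ext_iff] <;> omega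
  · have hk1 : k + 1 = L := by omega
    rw [hk1, Nat.mod_self]
    simp only [gcol]
    split_ifs with h1 h2 h2 <;> simp only [Ne, Fin.mk.injEq, Fin.ext_iff] <;> omega

lemma count_mod3 (N c : ℕ) (hc : c < 3) :
    ((range N).filter (fun k => k % 3 = c)).card = N / 3 + if c < N % 3 then 1 else 0 := by
  induction N with
  | zero => simp
  | succ N ih =>
    rw [Finset.range_add_one, Finset.filter_insert]
    by_cases h : N % 3 = c
    · rw [if_pos h, Finset.card_insert_of_notMem (by simp), ih]
      split_ifs with h1 h2 <;> omega
    · rw [if_neg h, ih]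
      split_ifs with h1 h2 <;> omega

lemma gcol_balanced {L : ℕ} (hL : 2 ≤ L) (c d : Fin 3) :
    ((range L).filter (fun k => gcol L k = c)).card ≤
      ((range L).filter (fun k => gcol L k = d)).card + 1 := by
  have key : ∀ e : Fin 3, ((range L).filter (fun k => gcol L k = e)).card =
      if L % 3 = 1 then (L - 1) / 3 + (if (e : ℕ) = 1 then 1 else 0)
      else L / 3 + if (e : ℕ) < L % 3 then 1 else 0 := by
    intro e
    by_cases hmod : L % 3 = 1
    · rw [if_pos hmod]
      have hrg : range L = insert (L - 1) (range (L - 1)) := by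
        have hLsucc : L = (L - 1) + 1 := by omega
        conv_lhs => rw [hLsucc]
        rw [Finset.range_add_one]
      rw [hrg, Finset.filter_insert]
      have hgl : gcol L (L - 1) = ⟨1, by norm_num⟩ := by
        unfold gcol
        rw [if_pos (And.intro (show L - 1 + 1 = L by omega) hmod)]
      have hrest : (range (L - 1)).filter (fun k => gcol L k = e) =
          (range (L - 1)).filter (fun k => k % 3 = (e : ℕ)) := by
        apply Finset.filter_congr
        intro k hk
        simp only [Finset.mem_range] at hk
        simp only [gcol, if_neg (by omega : ¬(k + 1 = L ∧ L % 3 = 1))]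
        simp [Fin.ext_iff]
      have hm0 : (L - 1) % 3 = 0 := by omega
      by_cases he : gcol L (L - 1) = e
      · rw [if_pos he, Finset.card_insert_of_notMem (by simp), hrest, count_mod3 _ _ e.isLt]
        have : (e : ℕ) = 1 := by rw [← he, hgl]
        rw [this]
        simp [hm0]
      · rw [if_neg he, hrest, count_mod3 _ _ e.isLt]
        have : (e : ℕ) ≠ 1 := by
          intro h
          apply he; rw [hgl]; exact Fin.ext (by simp [h])
        simp [hm0, this]
    · rw [if_neg hmod]
      have hrest : (range L).filter (fun k => gcol L k = e) =
          (range L).filter (fun k => k % 3 = (e : ℕ)) := by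
        apply Finset.filter_congr
        intro k hk
        simp only [gcol, if_neg (by tauto : ¬(k + 1 = L ∧ L % 3 = 1))]
        simp [Fin.ext_iff]
      rw [hrest, count_mod3 _ _ e.isLt]
  rw [key c, key d]
  have hc := c.isLt
  have hd := d.isLt
  split_ifs <;> omega

lemma balance_aux : ∀ (ε η : Fin 3 → Fin 2), (∃ c, ε c = 0) → (∃ c, η c = 0) →
    ∃ σ : Equiv.Perm (Fin 3), ∀ c d, (ε c : ℕ) + (η (σ c) : ℕ) ≤ (ε d : ℕ) + (η (σ d) : ℕ) + 1 := by
  decide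

lemma balance (b v : Fin 3 → ℕ) (hb : ∀ c d, b c ≤ b d + 1) (hv : ∀ c d, v c ≤ v d + 1) :
    ∃ σ : Equiv.Perm (Fin 3), ∀ c d, b c + v (σ c) ≤ b d + v (σ d) + 1 := by
  classical
  obtain ⟨c₀, -, hc₀⟩ := Finset.exists_min_image Finset.univ b ⟨0, Finset.mem_univ 0⟩
  obtain ⟨d₀, -, hd₀⟩ := Finset.exists_min_image Finset.univ v ⟨0, Finset.mem_univ 0⟩
  set ε : Fin 3 → Fin 2 := fun c => if b c = b c₀ then 0 else 1 with hε
  set η : Fin 3 → Fin 2 := fun c => if v c = v d₀ then 0 else 1 with hη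
  have hbc : ∀ c, b c = b c₀ + (ε c : ℕ) := by
    intro c
    have h1 := hb c c₀
    have h2 := hc₀ c (Finset.mem_univ c)
    by_cases h : b c = b c₀
    · simp [hε, h]
    · simp only [hε, if_neg h]
      omega
  have hvc : ∀ c, v c = v d₀ + (η c : ℕ) := by
    intro c
    have h1 := hv c d₀
    have h2 := hd₀ c (Finset.mem_univ c)
    by_cases h : v c = v d₀
    · simp [hη, h]
    · simp only [hη, if_neg h]
      omega
  obtain ⟨σ, hσ⟩ := balance_aux ε η ⟨c₀, by simp [hε]⟩ ⟨d₀, by simp [hη]⟩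
  refine ⟨σ, fun c d => ?_⟩
  have h := hσ c d
  have h1 := hbc c; have h2 := hbc d; have h3 := hvc (σ c); have h4 := hvc (σ d)
  omega

theorem exists_coloring {n : ℕ} (𝔰 : Equiv.Perm (Fin n)) (hfp : ∀ i, 𝔰 i ≠ i) :
    ∃ f : Fin n → Fin 3, (∀ i, f (𝔰 i) ≠ f i) ∧
      ∀ c d : Fin 3, (univ.filter (fun x => f x = c)).card ≤
        (univ.filter (fun x => f x = d)).card + 1 := by
  classical
  suffices H : ∀ (N : ℕ) (s : Finset (Fin n)), s.card ≤ N → (∀ i ∈ s, 𝔰 i ∈ s) →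
      ∃ f : Fin n → Fin 3, (∀ i ∈ s, f (𝔰 i) ≠ f i) ∧
        ∀ c d : Fin 3, (s.filter (fun x => f x = c)).card ≤
          (s.filter (fun x => f x = d)).card + 1 by
    obtain ⟨f, h1, h2⟩ := H univ.card univ le_rfl (fun i _ => mem_univ _)
    exact ⟨f, fun i => h1 i (mem_univ i), h2⟩
  intro N
  induction N with
  | zero =>
    intro s hcard _
    have : s = ∅ := Finset.card_eq_zero.mp (Nat.le_zero.mp hcard)
    subst this
    exact ⟨fun _ => 0, fun i hi => absurd hi (notMem_empty i), fun c d => by simp⟩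
  | succ N ih =>
    intro s hcard hclosed
    rcases s.eq_empty_or_nonempty with rfl | ⟨a, ha⟩
    · exact ⟨fun _ => 0, fun i hi => absurd hi (notMem_empty i), fun c d => by simp⟩
    -- the cycle of a
    set C : Finset (Fin n) := (𝔰.cycleOf a).support with hC
    have hcyc : 𝔰.IsCycleOn ↑C := 𝔰.isCycleOn_support_cycleOf a
    have haS : a ∈ 𝔰.support := mem_support.mpr (hfp a)
    have haC : a ∈ C := mem_support_cycleOf_iff.mpr ⟨SameCycle.refl _ _, haS⟩
    set L : ℕ := C.card with hLdef
    have hL2 : 2 ≤ L := two_le_card_support_cycleOf_iff.mpr (hfp a)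
    have hL0 : 0 < L := by omega
    -- C is closed under 𝔰 in both directions
    have hCstep : ∀ x, x ∈ C ↔ 𝔰 x ∈ C := by
      intro x
      rw [mem_support_cycleOf_iff, mem_support_cycleOf_iff, sameCycle_apply_right]
    -- powers of a
    have hpow_mem : ∀ k : ℕ, (𝔰 ^ k) a ∈ C := by
      intro k
      induction k with
      | zero => simpa using haC
      | succ k ihk =>
        rw [pow_succ', Equiv.Perm.mul_apply]
        exact (hCstep _).mp ihk
    have hinj : ∀ j < L, ∀ k < L, (𝔰 ^ j) a = (𝔰 ^ k) a → j = k := by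
      intro j hj k hk h
      have := (hcyc.pow_apply_eq_pow_apply (Finset.mem_coe.mpr haC)).mp h
      rw [← hLdef] at this
      have h1 : j % L = k % L := this
      rwa [Nat.mod_eq_of_lt hj, Nat.mod_eq_of_lt hk] at h1
    have himg : (range L).image (fun k => (𝔰 ^ k) a) = C := by
      apply Finset.eq_of_subset_of_card_le
      · intro x hx
        simp only [Finset.mem_image, Finset.mem_range] at hx
        obtain ⟨k, _, rfl⟩ := hx
        exact hpow_mem k
      · rw [Finset.card_image_of_injOn]
        · rw [Finset.card_range]
        · intro j hj k hk h
          exact hinj j (Finset.mem_range.mp hj) k (Finset.mem_range.mp hk) h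
    -- position function
    set p : Fin n → ℕ := fun x => if h : ∃ k, (𝔰 ^ k) a = x then Nat.find h else 0 with hp
    have hp_pow : ∀ k < L, p ((𝔰 ^ k) a) = k := by
      intro k hk
      have hex : ∃ m, (𝔰 ^ m) a = (𝔰 ^ k) a := ⟨k, rfl⟩
      simp only [hp, dif_pos hex]
      have h1 : Nat.find hex ≤ k := Nat.find_min' hex rfl
      exact hinj _ (lt_of_le_of_lt h1 hk) _ hk (Nat.find_spec hex)
    have hp_spec : ∀ x ∈ C, (𝔰 ^ p x) a = x ∧ p x < L := by
      intro x hx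
      rw [← himg] at hx
      simp only [Finset.mem_image, Finset.mem_range] at hx
      obtain ⟨k, hk, rfl⟩ := hx
      rw [hp_pow k hk]
      exact ⟨rfl, hk⟩
    have hp_step : ∀ x ∈ C, p (𝔰 x) = (p x + 1) % L := by
      intro x hx
      obtain ⟨hx1, hx2⟩ := hp_spec x hx
      have h1 : 𝔰 x = (𝔰 ^ (p x + 1)) a := by
        rw [pow_succ', Equiv.Perm.mul_apply, hx1]
      have h2 : (𝔰 ^ (p x + 1)) a = (𝔰 ^ ((p x + 1) % L)) a := by
        apply (hcyc.pow_apply_eq_pow_apply (Finset.mem_coe.mpr haC)).mpr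
        rw [← hLdef]
        exact (Nat.mod_modEq _ _).symm
      rw [h1, h2, hp_pow _ (Nat.mod_lt _ hL0)]
    -- C ⊆ s
    have hCs : C ⊆ s := by
      intro x hx
      rw [← himg] at hx
      simp only [Finset.mem_image, Finset.mem_range] at hx
      obtain ⟨k, -, rfl⟩ := hx
      induction k with
      | zero => simpa using ha
      | succ k ihk =>
        rw [pow_succ', Equiv.Perm.mul_apply]
        exact hclosed _ ihk
    -- apply IH to s \ C
    have hsub : s \ C ⊆ s := Finset.sdiff_subset
    have hcard' : (s \ C).card ≤ N := by
      have h1 : (s \ C).card < s.card := by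
        apply Finset.card_lt_card
        rw [Finset.ssubset_iff_of_subset hsub]
        exact ⟨a, ha, by simp [haC]⟩
      omega
    have hclosed' : ∀ i ∈ s \ C, 𝔰 i ∈ s \ C := by
      intro i hi
      rw [Finset.mem_sdiff] at hi ⊢
      exact ⟨hclosed i hi.1, fun h => hi.2 ((hCstep i).mpr h)⟩
    obtain ⟨f₀, hf₀p, hf₀b⟩ := ih (s \ C) hcard' hclosed'
    -- choose the color permutation
    obtain ⟨σ, hσ⟩ := balance (fun c => ((s \ C).filter (fun x => f₀ x = c)).card)
      (fun c => ((range L).filter (fun k => gcol L k = c)).card) hf₀b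
      (fun c d => gcol_balanced hL2 c d)
    set f : Fin n → Fin 3 := fun x => if x ∈ C then σ.symm (gcol L (p x)) else f₀ x with hf
    -- count on C
    have hcount : ∀ c : Fin 3, (C.filter (fun x => f x = c)).card =
        ((range L).filter (fun k => gcol L k = σ c)).card := by
      intro c
      have h1 : C.filter (fun x => f x = c) =
          ((range L).filter (fun k => σ.symm (gcol L k) = c)).image (fun k => (𝔰 ^ k) a) := by
        rw [← himg, Finset.filter_image]
        congr 1
        apply Finset.filter_congr
        intro k hk
        rw [Finset.mem_range] at hk
        have hmem : (𝔰 ^ k) a ∈ C := hpow_mem k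
        have : f ((𝔰 ^ k) a) = σ.symm (gcol L (p ((𝔰 ^ k) a))) := by
          rw [hf]; simp [hmem]
        rw [this, hp_pow k hk]
      rw [h1, Finset.card_image_of_injOn]
      · congr 1
        apply Finset.filter_congr
        intro k _
        rw [Equiv.symm_apply_eq]
      · intro j hj k hk h
        simp only [Finset.coe_filter, Set.mem_setOf_eq, Finset.mem_range] at hj hk
        exact hinj j hj.1 k hk.1 h
    -- counts on s
    have hsplit : ∀ c : Fin 3, (s.filter (fun x => f x = c)).card =
        ((s \ C).filter (fun x => f₀ x = c)).card +
        ((range L).filter (fun k => gcol L k = σ c)).card := by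
      intro c
      have h1 : s.filter (fun x => f x = c) =
          (s \ C).filter (fun x => f x = c) ∪ C.filter (fun x => f x = c) := by
        rw [← Finset.filter_union, Finset.sdiff_union_of_subset hCs]
      have h2 : (s \ C).filter (fun x => f x = c) = (s \ C).filter (fun x => f₀ x = c) := by
        apply Finset.filter_congr
        intro x hx
        rw [Finset.mem_sdiff] at hx
        rw [hf]
        simp [hx.2]
      rw [h1, Finset.card_union_of_disjoint, h2, hcount]
      exact Finset.disjoint_filter_filter (Finset.sdiff_disjoint)
    refine ⟨f, ?_, ?_⟩
    · intro i hi
      by_cases hiC : i ∈ C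
      · have h1 : 𝔰 i ∈ C := (hCstep i).mp hiC
        rw [hf]
        simp only [if_pos hiC, if_pos h1]
        intro h
        have h2 := σ.symm.injective h
        rw [hp_step i hiC] at h2
        exact gcol_step hL2 (hp_spec i hiC).2 h2
      · have h1 : 𝔰 i ∉ C := fun h => hiC ((hCstep i).mpr h)
        rw [hf]
        simp only [if_neg hiC, if_neg h1]
        exact hf₀p i (Finset.mem_sdiff.mpr ⟨hi, hiC⟩)
    · intro c d
      rw [hsplit c, hsplit d]
      exact hσ c d

end AuxColoring

lemma pairs_iIndep {Ω : Type*} [MeasurableSpace Ω] (μ : Measure Ω) [IsProbabilityMeasure μ]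
    {n : ℕ} (U : Fin n → Ω → ℝ) (hmeas : ∀ i, Measurable (U i))
    (hindep : iIndepFun U μ)
    {J : Type*} (a b : J → Fin n) (ha : Function.Injective a) (hb : Function.Injective b)
    (hba : ∀ j k, a j ≠ b k) :
    iIndepFun (fun j : J => fun ω => (U (a j) ω, U (b j) ω)) μ := by
  classical
  rw [iIndepFun_iff_iIndep]
  set Z : J → Ω → ℝ × ℝ := fun j ω => (U (a j) ω, U (b j) ω) with hZ
  have hZmeas : ∀ j, Measurable (Z j) := fun j => (hmeas (a j)).prodMk (hmeas (b j))
  set π : J → Set (Set Ω) := fun j =>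
    {t | ∃ A B : Set ℝ, MeasurableSet A ∧ MeasurableSet B ∧
      t = U (a j) ⁻¹' A ∩ U (b j) ⁻¹' B} with hπ
  have h_le : ∀ j, MeasurableSpace.comap (Z j) Prod.instMeasurableSpace ≤ ‹MeasurableSpace Ω› :=
    fun j => (hZmeas j).comap_le
  have h_pi : ∀ j, IsPiSystem (π j) := by
    rintro j t1 ⟨A1, B1, hA1, hB1, rfl⟩ t2 ⟨A2, B2, hA2, hB2, rfl⟩ -
    refine ⟨A1 ∩ A2, B1 ∩ B2, hA1.inter hA2, hB1.inter hB2, ?_⟩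
    rw [Set.preimage_inter, Set.preimage_inter]
    ext ω; simp; tauto
  have h_gen : ∀ j, MeasurableSpace.comap (Z j) Prod.instMeasurableSpace
      = MeasurableSpace.generateFrom (π j) := by
    intro j
    rw [← generateFrom_prod, MeasurableSpace.comap_generateFrom]
    congr 1
    ext u
    constructor
    · rintro ⟨v, ⟨A, hA, B, hB, rfl⟩, rfl⟩
      exact ⟨A, B, hA, hB, (Set.mk_preimage_prod _ _).symm⟩
    · rintro ⟨A, B, hA, hB, rfl⟩
      exact ⟨A ×ˢ B, Set.mem_image2_of_mem hA hB, Set.mk_preimage_prod _ _⟩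
  have h_ind : iIndepSets π μ := by
    rw [iIndepSets_iff]
    intro S s' hs'

    set P : J → Prop := fun j => ∃ A B : Set ℝ, MeasurableSet A ∧ MeasurableSet B ∧
      s' j = U (a j) ⁻¹' A ∩ U (b j) ⁻¹' B with hP
    set A : J → Set ℝ := fun j => if h : P j then h.choose else ∅ with hA
    set B : J → Set ℝ := fun j => if h : P j then h.choose_spec.choose else ∅ with hB
    have key : ∀ j ∈ S, MeasurableSet (A j) ∧ MeasurableSet (B j) ∧
        s' j = U (a j) ⁻¹' (A j) ∩ U (b j) ⁻¹' (B j) := by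
      intro j hj
      have h : P j := hs' j hj
      simp only [hA, hB, dif_pos h]
      exact ⟨h.choose_spec.choose_spec.1, h.choose_spec.choose_spec.2.1,
        h.choose_spec.choose_spec.2.2⟩
    -- the index set in Fin n and pieces
    set T : Finset (Fin n) := S.image a ∪ S.image b with hT
    set t : Fin n → Set Ω := fun i =>
      (⋂ j ∈ S.filter (fun j => a j = i), U i ⁻¹' A j) ∩
      (⋂ j ∈ S.filter (fun j => b j = i), U i ⁻¹' B j) with ht
    have hta : ∀ j ∈ S, t (a j) = U (a j) ⁻¹' (A j) := by
      intro j hj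
      have h1 : S.filter (fun k => a k = a j) = {j} := by
        ext k; simp only [Finset.mem_filter, Finset.mem_singleton]
        exact ⟨fun ⟨_, h⟩ => ha h, fun h => by subst h; exact ⟨hj, rfl⟩⟩
      have h2 : S.filter (fun k => b k = a j) = ∅ := by
        ext k; simp only [Finset.mem_filter, Finset.notMem_empty, iff_false]
        exact fun ⟨_, h⟩ => hba j k h.symm
      have heq : t (a j) = (⋂ k ∈ S.filter (fun k => a k = a j), U (a j) ⁻¹' A k) ∩
          (⋂ k ∈ S.filter (fun k => b k = a j), U (a j) ⁻¹' B k) := rfl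
      rw [heq, h1, h2]
      simp
    have htb : ∀ j ∈ S, t (b j) = U (b j) ⁻¹' (B j) := by
      intro j hj
      have h1 : S.filter (fun k => b k = b j) = {j} := by
        ext k; simp only [Finset.mem_filter, Finset.mem_singleton]
        exact ⟨fun ⟨_, h⟩ => hb h, fun h => by subst h; exact ⟨hj, rfl⟩⟩
      have h2 : S.filter (fun k => a k = b j) = ∅ := by
        ext k; simp only [Finset.mem_filter, Finset.notMem_empty, iff_false]
        exact fun ⟨_, h⟩ => hba k j h
      have heq : t (b j) = (⋂ k ∈ S.filter (fun k => a k = b j), U (b j) ⁻¹' A k) ∩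
          (⋂ k ∈ S.filter (fun k => b k = b j), U (b j) ⁻¹' B k) := rfl
      rw [heq, h1, h2]
      simp
    have hinter : ⋂ j ∈ S, s' j = ⋂ i ∈ T, t i := by
      ext ω
      rw [Set.mem_iInter₂, Set.mem_iInter₂]
      constructor
      · intro h i _
        refine ⟨?_, ?_⟩
        · rw [Set.mem_iInter₂]
          intro j hj
          rw [Finset.mem_filter] at hj
          obtain ⟨hjS, rfl⟩ := hj
          have h2 := h j hjS
          rw [(key j hjS).2.2] at h2
          exact h2.1
        · rw [Set.mem_iInter₂]
          intro j hj
          rw [Finset.mem_filter] at hj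
          obtain ⟨hjS, rfl⟩ := hj
          have h2 := h j hjS
          rw [(key j hjS).2.2] at h2
          exact h2.2
      · intro h j hj
        rw [(key j hj).2.2]
        have h1 := h (a j) (by rw [hT]; exact Finset.mem_union_left _ (Finset.mem_image_of_mem a hj))
        have h2 := h (b j) (by rw [hT]; exact Finset.mem_union_right _ (Finset.mem_image_of_mem b hj))
        rw [hta j hj] at h1
        rw [htb j hj] at h2
        exact ⟨h1, h2⟩
    have htmeas : ∀ i, MeasurableSet[MeasurableSpace.comap (U i) inferInstance] (t i) := by
      intro i
      refine ⟨(⋂ j ∈ S.filter (fun j => a j = i), A j) ∩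
        (⋂ j ∈ S.filter (fun j => b j = i), B j), ?_, ?_⟩
      · apply MeasurableSet.inter
        · apply MeasurableSet.biInter (Finset.countable_toSet _)
          intro j hj
          rw [Finset.mem_coe, Finset.mem_filter] at hj
          exact (key j hj.1).1
        · apply MeasurableSet.biInter (Finset.countable_toSet _)
          intro j hj
          rw [Finset.mem_coe, Finset.mem_filter] at hj
          exact (key j hj.1).2.1
      · rw [Set.preimage_inter, Set.preimage_iInter₂, Set.preimage_iInter₂]
    have hdisj : Disjoint (S.image a) (S.image b) := by
      rw [Finset.disjoint_left]
      rintro i hia hib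
      simp only [Finset.mem_image] at hia hib
      obtain ⟨j, _, rfl⟩ := hia
      obtain ⟨k, _, hk⟩ := hib
      exact hba j k hk.symm
    calc μ (⋂ j ∈ S, s' j) = μ (⋂ i ∈ T, t i) := by rw [hinter]
      _ = ∏ i ∈ T, μ (t i) := hindep.meas_biInter (fun i _ => htmeas i)
      _ = (∏ i ∈ S.image a, μ (t i)) * ∏ i ∈ S.image b, μ (t i) := by
          rw [hT, Finset.prod_union hdisj]
      _ = (∏ j ∈ S, μ (U (a j) ⁻¹' (A j))) * ∏ j ∈ S, μ (U (b j) ⁻¹' (B j)) := by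
          rw [Finset.prod_image (fun j hj k hk h => ha h),
            Finset.prod_image (fun j hj k hk h => hb h)]
          congr 1
          · exact Finset.prod_congr rfl fun j hj => by rw [hta j hj]
          · exact Finset.prod_congr rfl fun j hj => by rw [htb j hj]
      _ = ∏ j ∈ S, μ (s' j) := by
          rw [← Finset.prod_mul_distrib]
          apply Finset.prod_congr rfl
          intro j hj
          rw [(key j hj).2.2]
          exact ((hindep.indepFun (hba j j)).measure_inter_preimage_eq_mul _ _
            (key j hj).1 (key j hj).2.1).symm
  exact ProbabilityTheory.iIndepSets.iIndep h_le π h_pi h_gen h_ind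

/-- For a fixed-point-free permutation `𝔰` of `[n]` and i.i.d. uniform
`U₁,…,Uₙ`, the geometric construction `𝒫 = {(Uᵢ, U_{𝔰(i)})}` can be partitioned into three
subsets of deterministic sizes within `1` of `n/3`, each consisting of i.i.d. points
uniformly distributed in `[0,1]²`. -/
theorem stmt13 {Ω : Type*} [MeasurableSpace Ω] (μ : Measure Ω) [IsProbabilityMeasure μ]
    (n : ℕ) (𝔰 : Equiv.Perm (Fin n)) (hfp : ∀ i, 𝔰 i ≠ i)
    (U : Fin n → Ω → ℝ) (hmeas : ∀ i, Measurable (U i))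
    (hindep : iIndepFun U μ)
    (hlaw : ∀ i, Measure.map (U i) μ = volume.restrict (Set.Icc (0:ℝ) 1)) :
    ∃ V : Fin 3 → Finset (Fin n),
      (∀ i : Fin n, ∃! m : Fin 3, i ∈ V m) ∧
      (∀ m, |((V m).card : ℝ) - n / 3| ≤ 1) ∧
      (∀ m, iIndepFun
        (fun i : {x // x ∈ V m} => fun ω => (U i.1 ω, U (𝔰 i.1) ω)) μ) ∧
      (∀ m, ∀ i ∈ V m, Measure.map (fun ω => (U i ω, U (𝔰 i) ω)) μ
        = (volume.restrict (Set.Icc (0:ℝ) 1)).prod (volume.restrict (Set.Icc (0:ℝ) 1))) := by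
  classical
  obtain ⟨f, hfprop, hfbal⟩ := exists_coloring 𝔰 hfp
  refine ⟨fun m => Finset.univ.filter (fun x => f x = m), ?_, ?_, ?_, ?_⟩
  · intro i
    refine ⟨f i, by simp, ?_⟩
    intro m hm
    simp only [Finset.mem_filter, Finset.mem_univ, true_and] at hm
    exact hm.symm
  · intro m
    have hsum : (Finset.univ.filter (fun x => f x = (0:Fin 3))).card
        + (Finset.univ.filter (fun x => f x = (1:Fin 3))).card
        + (Finset.univ.filter (fun x => f x = (2:Fin 3))).card = n := by
      have h := Finset.card_eq_sum_card_fiberwise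
        (f := f) (s := Finset.univ) (t := Finset.univ) (fun x _ => Finset.mem_univ _)
      rw [Fin.sum_univ_three] at h
      simpa using h.symm
    have h0 := hfbal m 0
    have h1 := hfbal m 1
    have h2 := hfbal m 2
    have h0' := hfbal 0 m
    have h1' := hfbal 1 m
    have h2' := hfbal 2 m
    have hb : 3 * (Finset.univ.filter (fun x => f x = m)).card ≤ n + 3 ∧
        n ≤ 3 * (Finset.univ.filter (fun x => f x = m)).card + 3 := by
      fin_cases m <;> constructor <;> omega
    rw [abs_le]
    have hc1 := hb.1
    have hc2 := hb.2
    constructor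
    · have : (n : ℝ) ≤ 3 * ((Finset.univ.filter (fun x => f x = m)).card : ℝ) + 3 := by
        exact_mod_cast hc2
      linarith
    · have : 3 * ((Finset.univ.filter (fun x => f x = m)).card : ℝ) ≤ (n : ℝ) + 3 := by
        exact_mod_cast hc1
      linarith
  · intro m
    refine pairs_iIndep (J := {x : Fin n // x ∈ Finset.univ.filter (fun x => f x = m)})
      μ U hmeas hindep (fun j => j.1) (fun j => 𝔰 j.1) ?_ ?_ ?_
    · intro j k h
      exact Subtype.ext h
    · intro j k h
      exact Subtype.ext (𝔰.injective h)
    intro j k h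
    have hj := j.2
    have hk := k.2
    simp only [Finset.mem_filter, Finset.mem_univ, true_and] at hj hk
    have hne := hfprop k.1
    have h' : (j : Fin n) = 𝔰 k.1 := h
    rw [← h', hj, hk] at hne
    exact hne rfl
  · intro m i _
    have hne : i ≠ 𝔰 i := fun h => hfp i h.symm
    have hIndep2 : IndepFun (U i) (U (𝔰 i)) μ := hindep.indepFun hne
    rw [(indepFun_iff_map_prod_eq_prod_map_map (hmeas i).aemeasurable
      (hmeas (𝔰 i)).aemeasurable).mp hIndep2, hlaw i, hlaw (𝔰 i)]
end

section
/- Define the graph ℒ_t on the vertex set 𝒱_t with an edge between i and 𝔰(i) for each i (ignoring self-loops), where 𝔰 is the canonical t-cyclic permutation. Then ℒ_t is a dependency graph for the family (Z_i)_{i∈𝒱_t} = ((U_i, U_{𝔰(i)}))_{i∈𝒱_t}: for any disjoint subsets V₁, V₂ of 𝒱_t with no edge of ℒ_t between them, the families (Z_i)_{i∈V₁} and (Z_i)_{i∈V₂} are independent. -/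
open MeasureTheory ProbabilityTheory

/-- The graph `ℒ_t` (edges between `i` and `𝔰 i`) is a dependency graph for
the family `Z_i = (U_i, U_{𝔰(i)})`: if `V₁, V₂` are disjoint and connected by no edge
(i.e. `𝔰 i ≠ j` and `𝔰 j ≠ i` for `i ∈ V₁`, `j ∈ V₂`), then `(Z_i)_{i∈V₁}` and
`(Z_j)_{j∈V₂}` are independent. -/
theorem stmt14 {Ω : Type*} [MeasurableSpace Ω] (μ : Measure Ω) [IsProbabilityMeasure μ]
    (n : ℕ) (𝔰 : Equiv.Perm (Fin n))
    (U : Fin n → Ω → ℝ) (hmeas : ∀ i, Measurable (U i))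
    (hindep : iIndepFun U μ)
    (hlaw : ∀ i, Measure.map (U i) μ = volume.restrict (Set.Icc (0:ℝ) 1))
    (V₁ V₂ : Finset (Fin n)) (hdisj : Disjoint V₁ V₂)
    (hedge : ∀ i ∈ V₁, ∀ j ∈ V₂, 𝔰 i ≠ j ∧ 𝔰 j ≠ i) :
    IndepFun (fun ω => fun i : {x // x ∈ V₁} => (U i.1 ω, U (𝔰 i.1) ω))
      (fun ω => fun j : {x // x ∈ V₂} => (U j.1 ω, U (𝔰 j.1) ω)) μ := by
  classical
  set S : Finset (Fin n) := V₁ ∪ V₁.image 𝔰 with hS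
  set T : Finset (Fin n) := V₂ ∪ V₂.image 𝔰 with hT
  have hST : Disjoint S T := by
    rw [Finset.disjoint_left]
    intro a ha hb
    simp only [hS, hT, Finset.mem_union, Finset.mem_image] at ha hb
    rcases ha with ha | ⟨i, hi, hia⟩ <;> rcases hb with hb | ⟨j, hj, hja⟩
    · exact (Finset.disjoint_left.mp hdisj ha) hb
    · exact (hedge a ha j hj).2 hja
    · exact (hedge i hi a hb).1 hia
    · exact Finset.disjoint_left.mp hdisj hi (𝔰.injective (hia.trans hja.symm) ▸ hj)
  have hbase := hindep.indepFun_finset S T hST hmeas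
  have hm1 : ∀ i : {x // x ∈ V₁}, (i.1 ∈ S) ∧ (𝔰 i.1 ∈ S) := fun i =>
    ⟨Finset.mem_union_left _ i.2, Finset.mem_union_right _ (Finset.mem_image_of_mem _ i.2)⟩
  have hm2 : ∀ j : {x // x ∈ V₂}, (j.1 ∈ T) ∧ (𝔰 j.1 ∈ T) := fun j =>
    ⟨Finset.mem_union_left _ j.2, Finset.mem_union_right _ (Finset.mem_image_of_mem _ j.2)⟩
  have := hbase.comp (φ := fun g : {x // x ∈ S} → ℝ => fun i : {x // x ∈ V₁} =>
      (g ⟨i.1, (hm1 i).1⟩, g ⟨𝔰 i.1, (hm1 i).2⟩))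
    (ψ := fun g : {x // x ∈ T} → ℝ => fun j : {x // x ∈ V₂} =>
      (g ⟨j.1, (hm2 j).1⟩, g ⟨𝔰 j.1, (hm2 j).2⟩))
    (measurable_pi_lambda _ fun i =>
      ((measurable_pi_apply _).prodMk (measurable_pi_apply _)))
    (measurable_pi_lambda _ fun j =>
      ((measurable_pi_apply _).prodMk (measurable_pi_apply _)))
  exact this
end

section
/- Fix r ≥ 1 and π,ρ ∈ S_r. Let Ẑ₁,…,Ẑ_{r−1} be i.i.d. uniform on [0,1]², define ψ_π(z) := P(perm(Ẑ₁,…,Ẑ_{r−1},z) = π) for z ∈ [0,1]², and let U,V,W be i.i.d. Uniform[0,1]. Then Cov(ψ_π(U,V), ψ_ρ(V,W)) = 0. In particular, E[ψ_π(U,V) | V] = 1/r! almost surely. -/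
open MeasureTheory ProbabilityTheory

/-- The uniform measure on the unit square `[0,1]²`. -/
noncomputable def unifSq : Measure (ℝ × ℝ) :=
  (volume.restrict (Set.Icc (0:ℝ) 1)).prod (volume.restrict (Set.Icc (0:ℝ) 1))

/-- `psi m π z = P(perm(Ẑ₁,…,Ẑ_m, z) = π)` for `Ẑ₁,…,Ẑ_m` i.i.d. uniform on `[0,1]²`
(here `r = m + 1`). -/
noncomputable def psi (m : ℕ) (π : Equiv.Perm (Fin (m+1))) (z : ℝ × ℝ) : ℝ :=
  ((Measure.pi fun _ : Fin m => unifSq)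
    {f | permOfPoints (Fin.snoc (fun j => (f j).1) z.1)
      (Fin.snoc (fun j => (f j).2) z.2) = π}).toReal



open Set Function
open scoped ENNReal

section SortLemmas
variable {k : ℕ}

lemma sort_eq_of_strictMono {f : Fin k → ℝ} {σ : Equiv.Perm (Fin k)}
    (h : StrictMono (f ∘ σ)) : Tuple.sort f = σ := by
  refine (Tuple.eq_sort_iff.2 ⟨h.monotone, fun i j hij hfe => ?_⟩).symm
  exact absurd (h.injective (hfe : (f ∘ σ) i = (f ∘ σ) j)) hij.ne

lemma strictMono_comp_sort {f : Fin k → ℝ} (hf : Function.Injective f) :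
    StrictMono (f ∘ Tuple.sort f) :=
  (Tuple.monotone_sort f).strictMono_of_injective (hf.comp (Equiv.injective _))

lemma stdz_comp_perm_s16 {f : Fin k → ℝ} (hf : Function.Injective f) (τ : Equiv.Perm (Fin k)) :
    stdz (f ∘ τ) = stdz f * τ := by
  have hsort : Tuple.sort (f ∘ τ) = τ⁻¹ * Tuple.sort f := by
    apply sort_eq_of_strictMono
    have : (f ∘ ⇑τ) ∘ ⇑(τ⁻¹ * Tuple.sort f) = f ∘ ⇑(Tuple.sort f) := by
      funext i; simp [Equiv.Perm.mul_apply]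
    rw [this]
    exact strictMono_comp_sort hf
  simp [stdz, hsort, mul_inv_rev]

lemma measurableSet_sort_eq (σ : Equiv.Perm (Fin k)) :
    MeasurableSet {f : Fin k → ℝ | Tuple.sort f = σ} := by
  have hset : {f : Fin k → ℝ | Tuple.sort f = σ}
      = (⋂ p : Fin k × Fin k, {f : Fin k → ℝ | p.1 ≤ p.2 → f (σ p.1) ≤ f (σ p.2)})
        ∩ ⋂ p : Fin k × Fin k,
            {f : Fin k → ℝ | p.1 < p.2 → f (σ p.1) = f (σ p.2) → σ p.1 < σ p.2} := by
    ext f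
    simp only [mem_setOf_eq, mem_inter_iff, mem_iInter, Prod.forall]
    constructor
    · rintro rfl
      have h := Tuple.eq_sort_iff.1 (rfl : Tuple.sort f = Tuple.sort f)
      exact ⟨fun i j hij => h.1 hij, fun i j hij => h.2 i j hij⟩
    · rintro ⟨h1, h2⟩
      exact (Tuple.eq_sort_iff.2 ⟨fun i j hij => h1 i j hij, fun i j => h2 i j⟩).symm
  rw [hset]
  refine MeasurableSet.inter (MeasurableSet.iInter fun p => ?_)
    (MeasurableSet.iInter fun p => ?_)
  · by_cases hp : p.1 ≤ p.2
    · simp only [hp, forall_true_left]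
      exact measurableSet_le (measurable_pi_apply _) (measurable_pi_apply _)
    · convert MeasurableSet.univ using 1
      ext f; simp [hp]
  · by_cases hp : p.1 < p.2
    · by_cases hσ : σ p.1 < σ p.2
      · convert MeasurableSet.univ using 1
        ext f; simp [hp, hσ]
      · have : {f : Fin k → ℝ | p.1 < p.2 → f (σ p.1) = f (σ p.2) → σ p.1 < σ p.2}
            = {f : Fin k → ℝ | f (σ p.1) = f (σ p.2)}ᶜ := by
          ext f; simp [hp, hσ]
        rw [this]
        exact (measurableSet_eq_fun (measurable_pi_apply (σ p.1)) (measurable_pi_apply (σ p.2))).compl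
    · convert MeasurableSet.univ using 1
      ext f; simp [hp]

lemma measurableSet_stdz_eq (σ : Equiv.Perm (Fin k)) :
    MeasurableSet {f : Fin k → ℝ | stdz f = σ} := by
  have : {f : Fin k → ℝ | stdz f = σ} = {f : Fin k → ℝ | Tuple.sort f = σ⁻¹} := by
    ext f; simp [stdz, inv_eq_iff_eq_inv]
  rw [this]; exact measurableSet_sort_eq _

end SortLemmas

noncomputable def uI : Measure ℝ := volume.restrict (Set.Icc (0:ℝ) 1)

instance : IsProbabilityMeasure uI := by
  constructor
  rw [uI, Measure.restrict_apply_univ, Real.volume_Icc]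
  norm_num

instance : NullSingletonClass uI := by
  constructor
  intro x
  rw [uI]
  exact le_antisymm (by
    calc (volume.restrict (Set.Icc (0:ℝ) 1)) {x} ≤ volume {x} :=
      Measure.restrict_le_self _
    _ = 0 := measure_singleton x) (zero_le)

section LemA
variable {n : ℕ}

/-- coordinates-equal set is null -/
lemma pi_coord_eq_null {m : ℕ} (i j : Fin (m+1)) (hij : i ≠ j) :
    (Measure.pi fun _ : Fin (m+1) => uI) {X | X i = X j} = 0 := by
  obtain ⟨k, hk⟩ := Fin.exists_succAbove_eq (Ne.symm hij)
  set e := MeasurableEquiv.piFinSuccAbove (fun _ : Fin (m+1) => ℝ) i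
  have he : MeasurePreserving e (Measure.pi fun _ : Fin (m+1) => uI)
      (uI.prod (Measure.pi fun _ : Fin m => uI)) :=
    measurePreserving_piFinSuccAbove (fun _ => uI) i
  have hbox : ∀ a : ℝ, MeasurableSet (Set.univ.pi
      fun l : Fin m => if l = k then ({a} : Set ℝ) else Set.univ) := by
    intro a
    refine MeasurableSet.univ_pi fun l => ?_
    by_cases h : l = k <;> simp [h]
  have hs : MeasurableSet {q : ℝ × (Fin m → ℝ) | q.1 = q.2 k} :=
    measurableSet_eq_fun measurable_fst ((measurable_pi_apply k).comp measurable_snd)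
  have hpre : {X : Fin (m+1) → ℝ | X i = X j} = e ⁻¹' {q | q.1 = q.2 k} := by
    ext X
    simp only [Set.mem_setOf_eq, Set.mem_preimage]
    have : e X = (X i, fun l => X (i.succAbove l)) := rfl
    rw [this]
    simp [hk]
  rw [hpre, he.measure_preimage hs.nullMeasurableSet,
    Measure.prod_apply hs]
  have : ∀ a : ℝ, (Measure.pi fun _ : Fin m => uI) (Prod.mk a ⁻¹' {q : ℝ × (Fin m → ℝ) | q.1 = q.2 k}) = 0 := by
    intro a
    have : (Prod.mk a ⁻¹' {q : ℝ × (Fin m → ℝ) | q.1 = q.2 k})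
        = Set.univ.pi fun l : Fin m => if l = k then ({a} : Set ℝ) else Set.univ := by
      ext g; simp only [Set.mem_preimage, Set.mem_setOf_eq, Set.mem_univ_pi]
      constructor
      · intro h l; by_cases hl : l = k <;> simp [hl, ← h]
      · intro h; have := h k; simp at this; simp [this]
    rw [this, Measure.pi_pi]
    exact Finset.prod_eq_zero (Finset.mem_univ k) (by simp)
  simp only [this, lintegral_zero]

lemma pi_not_injective_null (m : ℕ) :
    (Measure.pi fun _ : Fin (m+1) => uI) {X | ¬ Function.Injective X} = 0 := by
  have hsub : {X : Fin (m+1) → ℝ | ¬ Function.Injective X}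
      ⊆ ⋃ (i : Fin (m+1)) (j : Fin (m+1)) (_ : i ≠ j), {X | X i = X j} := by
    intro X hX
    simp only [Set.mem_setOf_eq, Function.Injective, not_forall] at hX
    obtain ⟨a, b, hab, hne⟩ := hX
    exact Set.mem_iUnion.2 ⟨a, Set.mem_iUnion.2 ⟨b, Set.mem_iUnion.2 ⟨hne, hab⟩⟩⟩
  refine measure_mono_null hsub ?_
  refine measure_iUnion_null fun i => measure_iUnion_null fun j => measure_iUnion_null fun hij =>
    pi_coord_eq_null i j hij

lemma measurableSet_injective (m : ℕ) :
    MeasurableSet {X : Fin (m+1) → ℝ | Function.Injective X} := by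
  have : {X : Fin (m+1) → ℝ | Function.Injective X}
      = (⋃ (i : Fin (m+1)) (j : Fin (m+1)) (_ : i ≠ j), {X | X i = X j})ᶜ := by
    ext X
    simp only [Set.mem_compl_iff, Set.mem_iUnion, Set.mem_setOf_eq, not_exists]
    constructor
    · intro h i j hij hXij; exact hij (h hXij)
    · intro h a b hab
      by_contra hne
      exact h a b hne hab
  rw [this]
  refine (MeasurableSet.iUnion fun i => MeasurableSet.iUnion fun j =>
    MeasurableSet.iUnion fun _ => ?_).compl
  exact measurableSet_eq_fun (measurable_pi_apply i) (measurable_pi_apply j)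

/-- Lemma A : the standardization of i.i.d. atomless coordinates is uniform on `S_n`. -/
lemma pi_stdz_eq (m : ℕ) (σ₀ : Equiv.Perm (Fin (m+1))) :
    (Measure.pi fun _ : Fin (m+1) => uI) {X | stdz X = σ₀}
      = (((m+1).factorial : ℝ≥0∞))⁻¹ := by
  set κ := (Measure.pi fun _ : Fin (m+1) => uI) with hκ
  have : IsProbabilityMeasure κ := by infer_instance
  set A : Equiv.Perm (Fin (m+1)) → Set (Fin (m+1) → ℝ) :=
    fun σ => {X | Function.Injective X} ∩ {X | stdz X = σ} with hA
  have hAm : ∀ σ, MeasurableSet (A σ) :=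
    fun σ => (measurableSet_injective m).inter (measurableSet_stdz_eq σ)
  -- all A σ have equal measure
  have hEq : ∀ σ₁ σ₂, κ (A σ₁) = κ (A σ₂) := by
    intro σ₁ σ₂
    set τ : Equiv.Perm (Fin (m+1)) := σ₂⁻¹ * σ₁ with hτ
    have hC : MeasurePreserving
        (MeasurableEquiv.arrowCongr' ((τ : Fin (m+1) ≃ Fin (m+1)).symm)
          (MeasurableEquiv.refl ℝ)) κ κ :=
      measurePreserving_arrowCongr' (fun _ => uI) (fun _ => uI) _ _
        (fun _ => ⟨measurable_id, Measure.map_id⟩)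
    have happ : ∀ X : Fin (m+1) → ℝ,
        (MeasurableEquiv.arrowCongr' ((τ : Fin (m+1) ≃ Fin (m+1)).symm)
          (MeasurableEquiv.refl ℝ)) X = X ∘ τ := by
      intro X
      funext i
      simp [MeasurableEquiv.arrowCongr', Equiv.arrowCongr', Equiv.arrowCongr]
    have hpre : (MeasurableEquiv.arrowCongr' ((τ : Fin (m+1) ≃ Fin (m+1)).symm)
          (MeasurableEquiv.refl ℝ)) ⁻¹' (A σ₁) = A (σ₁ * τ⁻¹) := by
      ext X
      simp only [Set.mem_preimage, happ, hA, Set.mem_inter_iff, Set.mem_setOf_eq]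
      constructor
      · rintro ⟨hinj, hstdz⟩
        have hXinj : Function.Injective X := (Equiv.injective_comp τ X).1 hinj
        refine ⟨hXinj, ?_⟩
        rw [stdz_comp_perm_s16 hXinj τ] at hstdz
        rw [← hstdz]; group
      · rintro ⟨hinj, hstdz⟩
        refine ⟨(Equiv.injective_comp τ X).2 hinj, ?_⟩
        rw [stdz_comp_perm_s16 hinj τ, hstdz]; group
    have := hC.measure_preimage (hAm σ₁).nullMeasurableSet
    rw [hpre] at this
    have hστ : σ₁ * τ⁻¹ = σ₂ := by rw [hτ]; group
    rw [hστ] at this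
    exact this.symm
  -- the A σ partition the injective functions
  have hdisj : Pairwise (Function.onFun Disjoint A) := by
    intro σ₁ σ₂ hne
    refine Set.disjoint_left.2 fun X hX1 hX2 => ?_
    exact hne (hX1.2.symm.trans hX2.2)
  have hUnion : (⋃ σ, A σ) = {X | Function.Injective X} := by
    ext X
    simp only [Set.mem_iUnion, hA, Set.mem_inter_iff, Set.mem_setOf_eq]
    constructor
    · rintro ⟨σ, h, _⟩; exact h
    · intro h; exact ⟨stdz X, h, rfl⟩
  have hInj1 : κ {X | Function.Injective X} = 1 := by
    have hc := pi_not_injective_null m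
    have hcompl : {X : Fin (m+1) → ℝ | Function.Injective X}ᶜ
        = {X | ¬ Function.Injective X} := by ext X; simp
    have : κ {X | Function.Injective X}ᶜ = 0 := by rw [hcompl]; exact hc
    rwa [prob_compl_eq_zero_iff (measurableSet_injective m)] at this
  have hsum : ∑ σ : Equiv.Perm (Fin (m+1)), κ (A σ) = 1 := by
    rw [← tsum_fintype (L := SummationFilter.unconditional _), ← measure_iUnion hdisj hAm, hUnion, hInj1]
  have hval : ((m+1).factorial : ℝ≥0∞) * κ (A σ₀) = 1 := by
    have : ∑ σ : Equiv.Perm (Fin (m+1)), κ (A σ)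
        = (Fintype.card (Equiv.Perm (Fin (m+1)))) * κ (A σ₀) := by
      rw [Finset.sum_congr rfl (fun σ _ => hEq σ σ₀), Finset.sum_const, Finset.card_univ,
        nsmul_eq_mul]
    rw [this] at hsum
    rw [← hsum, Fintype.card_perm, Fintype.card_fin]
  have hfact_ne : ((m+1).factorial : ℝ≥0∞) ≠ 0 := by
    simp [Nat.factorial_ne_zero]
  have hfact_top : ((m+1).factorial : ℝ≥0∞) ≠ ⊤ := by simp
  have hAval : κ (A σ₀) = (((m+1).factorial : ℝ≥0∞))⁻¹ := by
    rw [← one_mul (κ (A σ₀)), ← ENNReal.inv_mul_cancel hfact_ne hfact_top, mul_assoc, hval,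
      mul_one]
  -- remove the injectivity condition
  refine le_antisymm ?_ ?_
  · have h1 : κ {X | stdz X = σ₀} ≤ κ (A σ₀ ∪ {X | ¬ Function.Injective X}) := by
      refine measure_mono fun X hX => ?_
      by_cases h : Function.Injective X
      · exact Or.inl ⟨h, hX⟩
      · exact Or.inr h
    have h2 : κ (A σ₀ ∪ {X | ¬ Function.Injective X})
        ≤ κ (A σ₀) + κ {X | ¬ Function.Injective X} := measure_union_le _ _
    rw [pi_not_injective_null m, add_zero, hAval] at h2
    exact h1.trans h2
  · rw [← hAval]
    exact measure_mono fun X hX => hX.2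

end LemA

section Core

variable {m : ℕ}

lemma snoc_castSucc_self (X : Fin (m+1) → ℝ) :
    (Fin.snoc (fun j : Fin m => X j.castSucc) (X (Fin.last m)) : Fin (m+1) → ℝ) = X := by
  funext i
  refine Fin.lastCases ?_ ?_ i
  · simp
  · intro j; simp

lemma measurable_snocfun : Measurable (fun q : ℝ × (Fin m → ℝ) =>
    (Fin.snoc q.2 q.1 : Fin (m+1) → ℝ)) := by
  refine measurable_pi_lambda _ fun i => ?_
  refine Fin.lastCases ?_ ?_ i
  · simpa using measurable_fst
  · intro j
    simp only [Fin.snoc_castSucc]; exact (measurable_pi_apply j).comp measurable_snd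

lemma measurable_snoc_const (v : ℝ) : Measurable (fun y : Fin m → ℝ =>
    (Fin.snoc y v : Fin (m+1) → ℝ)) :=
  measurable_snocfun.comp (measurable_const.prodMk measurable_id)

/-- measurability of the "stdz of snoc equals a fiberwise-measurable permutation" event -/
lemma measurableSet_core (g : (Fin m → ℝ) → Equiv.Perm (Fin (m+1)))
    (hg : ∀ σ, MeasurableSet {y : Fin m → ℝ | g y = σ}) :
    MeasurableSet {q : (Fin (m+1) → ℝ) × (Fin m → ℝ) | stdz q.1 = g q.2} := by
  have : {q : (Fin (m+1) → ℝ) × (Fin m → ℝ) | stdz q.1 = g q.2}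
      = ⋃ σ : Equiv.Perm (Fin (m+1)),
          ({X | stdz X = σ} ×ˢ {y | g y = σ}) := by
    ext ⟨X, y⟩
    simp only [Set.mem_setOf_eq, Set.mem_iUnion, Set.mem_prod]
    constructor
    · intro h; exact ⟨g y, h, rfl⟩
    · rintro ⟨σ, h1, h2⟩; rw [h1, h2]
  rw [this]
  exact MeasurableSet.iUnion fun σ => (measurableSet_stdz_eq σ).prod (hg σ)

noncomputable def unifSq' : Measure (ℝ × ℝ) := uI.prod uI

instance : IsProbabilityMeasure unifSq' := by
  rw [unifSq']; infer_instance

lemma measurableSet_coreS (g : (Fin m → ℝ) → Equiv.Perm (Fin (m+1)))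
    (hg : ∀ σ, MeasurableSet {y : Fin m → ℝ | g y = σ}) :
    MeasurableSet {p : ℝ × (Fin m → ℝ × ℝ) |
      stdz (Fin.snoc (fun j => (p.2 j).1) p.1) = g (fun j => (p.2 j).2)} := by
  have hmap : Measurable (fun p : ℝ × (Fin m → ℝ × ℝ) =>
      ((Fin.snoc (fun j => (p.2 j).1) p.1 : Fin (m+1) → ℝ),
        ((fun j => (p.2 j).2) : Fin m → ℝ))) := by
    refine Measurable.prodMk ?_ ?_
    · have hin : Measurable (fun p : ℝ × (Fin m → ℝ × ℝ) =>
          ((p.1, fun j => (p.2 j).1) : ℝ × (Fin m → ℝ))) :=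
        measurable_fst.prodMk (measurable_pi_lambda _ fun j => measurable_fst.comp
          ((measurable_pi_apply j).comp measurable_snd))
      exact measurable_snocfun.comp hin
    · exact measurable_pi_lambda _ fun j => measurable_snd.comp
        ((measurable_pi_apply j).comp measurable_snd)
  exact hmap (measurableSet_core g hg)

/-- Core lemma, version 1 : x-coordinate of the extra point is integrated. -/
lemma core1 (g : (Fin m → ℝ) → Equiv.Perm (Fin (m+1)))
    (hg : ∀ σ, MeasurableSet {y : Fin m → ℝ | g y = σ}) :
    (uI.prod (Measure.pi fun _ : Fin m => unifSq')) {p : ℝ × (Fin m → ℝ × ℝ) |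
      stdz (Fin.snoc (fun j => (p.2 j).1) p.1) = g (fun j => (p.2 j).2)}
      = (((m+1).factorial : ℝ≥0∞))⁻¹ := by
  classical
  set κn := Measure.pi (fun _ : Fin (m+1) => uI)
  set κm := Measure.pi (fun _ : Fin m => uI)
  set μm := Measure.pi (fun _ : Fin m => unifSq')
  -- the measure-preserving rearrangement
  set e1 := MeasurableEquiv.piFinSuccAbove (fun _ : Fin (m+1) => ℝ) (Fin.last m)
  have hp1 : MeasurePreserving e1 κn (uI.prod κm) :=
    measurePreserving_piFinSuccAbove (fun _ => uI) (Fin.last m)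
  have hp2 : MeasurePreserving (Prod.map e1 (id : (Fin m → ℝ) → (Fin m → ℝ)))
      (κn.prod κm) ((uI.prod κm).prod κm) :=
    hp1.prod (MeasurePreserving.id κm)
  have hp3 : MeasurePreserving (MeasurableEquiv.prodAssoc : (ℝ × (Fin m → ℝ)) × (Fin m → ℝ)
      ≃ᵐ ℝ × ((Fin m → ℝ) × (Fin m → ℝ)))
      ((uI.prod κm).prod κm) (uI.prod (κm.prod κm)) :=
    measurePreserving_prodAssoc uI κm κm
  have hp4 : MeasurePreserving
      (Prod.map (id : ℝ → ℝ) (MeasurableEquiv.arrowProdEquivProdArrow ℝ ℝ (Fin m)).symm)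
      (uI.prod (κm.prod κm)) (uI.prod μm) := by
    refine (MeasurePreserving.id uI).prod ?_
    exact (measurePreserving_arrowProdEquivProdArrow ℝ ℝ (Fin m)
      (fun _ => uI) (fun _ => uI)).symm
  set E : (Fin (m+1) → ℝ) × (Fin m → ℝ) → ℝ × (Fin m → ℝ × ℝ) :=
    (Prod.map (id : ℝ → ℝ) (MeasurableEquiv.arrowProdEquivProdArrow ℝ ℝ (Fin m)).symm)
      ∘ (MeasurableEquiv.prodAssoc : (ℝ × (Fin m → ℝ)) × (Fin m → ℝ)
        ≃ᵐ ℝ × ((Fin m → ℝ) × (Fin m → ℝ)))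
      ∘ (Prod.map e1 (id : (Fin m → ℝ) → (Fin m → ℝ))) with hE
  have hEp : MeasurePreserving E (κn.prod κm) (uI.prod μm) :=
    hp4.comp (hp3.comp hp2)
  -- compute E explicitly
  have hEapp : ∀ q : (Fin (m+1) → ℝ) × (Fin m → ℝ),
      E q = (q.1 (Fin.last m), fun j => (q.1 j.castSucc, q.2 j)) := by
    rintro ⟨X, Y⟩
    have h1 : e1 X = (X (Fin.last m), fun j => X ((Fin.last m).succAbove j)) := rfl
    simp only [hE, Function.comp_apply, Prod.map_apply, h1, id_eq]
    have h2 : (MeasurableEquiv.prodAssoc : (ℝ × (Fin m → ℝ)) × (Fin m → ℝ)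
        ≃ᵐ ℝ × ((Fin m → ℝ) × (Fin m → ℝ)))
        ((X (Fin.last m), fun j => X ((Fin.last m).succAbove j)), Y)
        = (X (Fin.last m), (fun j => X ((Fin.last m).succAbove j), Y)) := rfl
    rw [h2]
    have h3 : (MeasurableEquiv.arrowProdEquivProdArrow ℝ ℝ (Fin m)).symm
        ((fun j => X ((Fin.last m).succAbove j)), Y)
        = fun j => (X ((Fin.last m).succAbove j), Y j) := rfl
    simp only [Prod.map_apply, id_eq, h3]
    have h4 : (fun j : Fin m => (X ((Fin.last m).succAbove j), Y j))
        = fun j => (X j.castSucc, Y j) := by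
      funext j; rw [Fin.succAbove_last]
    rw [h4]
  set S := {p : ℝ × (Fin m → ℝ × ℝ) |
      stdz (Fin.snoc (fun j => (p.2 j).1) p.1) = g (fun j => (p.2 j).2)} with hS
  have hSm := measurableSet_coreS g hg
  have hpre : E ⁻¹' S = {q : (Fin (m+1) → ℝ) × (Fin m → ℝ) | stdz q.1 = g q.2} := by
    ext ⟨X, Y⟩
    simp only [Set.mem_preimage, hEapp, hS, Set.mem_setOf_eq]
    rw [snoc_castSucc_self X]
  have key : (κn.prod κm) {q : (Fin (m+1) → ℝ) × (Fin m → ℝ) | stdz q.1 = g q.2}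
      = (((m+1).factorial : ℝ≥0∞))⁻¹ := by
    rw [Measure.prod_apply_symm (measurableSet_core g hg)]
    have hsec : ∀ y : Fin m → ℝ,
        κn ((fun x => (x, y)) ⁻¹' {q : (Fin (m+1) → ℝ) × (Fin m → ℝ) | stdz q.1 = g q.2})
          = (((m+1).factorial : ℝ≥0∞))⁻¹ := by
      intro y
      have : ((fun x => (x, y)) ⁻¹' {q : (Fin (m+1) → ℝ) × (Fin m → ℝ) | stdz q.1 = g q.2})
          = {X | stdz X = g y} := rfl
      rw [this]
      exact pi_stdz_eq m (g y)
    simp only [hsec]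
    simp [lintegral_const]
  calc (uI.prod μm) S = (κn.prod κm) (E ⁻¹' S) :=
        (hEp.measure_preimage hSm.nullMeasurableSet).symm
    _ = (((m+1).factorial : ℝ≥0∞))⁻¹ := by rw [hpre]; exact key

lemma measurableSet_coreS2 (g : (Fin m → ℝ) → Equiv.Perm (Fin (m+1)))
    (hg : ∀ σ, MeasurableSet {y : Fin m → ℝ | g y = σ}) :
    MeasurableSet {p : ℝ × (Fin m → ℝ × ℝ) |
      stdz (Fin.snoc (fun j => (p.2 j).2) p.1) = g (fun j => (p.2 j).1)} := by
  have hmap : Measurable (fun p : ℝ × (Fin m → ℝ × ℝ) =>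
      ((Fin.snoc (fun j => (p.2 j).2) p.1 : Fin (m+1) → ℝ),
        ((fun j => (p.2 j).1) : Fin m → ℝ))) := by
    refine Measurable.prodMk ?_ ?_
    · have hin : Measurable (fun p : ℝ × (Fin m → ℝ × ℝ) =>
          ((p.1, fun j => (p.2 j).2) : ℝ × (Fin m → ℝ))) :=
        measurable_fst.prodMk (measurable_pi_lambda _ fun j => measurable_snd.comp
          ((measurable_pi_apply j).comp measurable_snd))
      exact measurable_snocfun.comp hin
    · exact measurable_pi_lambda _ fun j => measurable_fst.comp
        ((measurable_pi_apply j).comp measurable_snd)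
  exact hmap (measurableSet_core g hg)

/-- Core lemma, version 2 : y-coordinate of the extra point is integrated. -/
lemma core2 (g : (Fin m → ℝ) → Equiv.Perm (Fin (m+1)))
    (hg : ∀ σ, MeasurableSet {y : Fin m → ℝ | g y = σ}) :
    (uI.prod (Measure.pi fun _ : Fin m => unifSq')) {p : ℝ × (Fin m → ℝ × ℝ) |
      stdz (Fin.snoc (fun j => (p.2 j).2) p.1) = g (fun j => (p.2 j).1)}
      = (((m+1).factorial : ℝ≥0∞))⁻¹ := by
  set μm := Measure.pi (fun _ : Fin m => unifSq')
  set Sw : ℝ × (Fin m → ℝ × ℝ) → ℝ × (Fin m → ℝ × ℝ) :=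
    Prod.map (id : ℝ → ℝ) (fun f : Fin m → ℝ × ℝ => fun j => Prod.swap (f j)) with hSw
  have hswap : MeasurePreserving (fun p : ℝ × ℝ => Prod.swap p) unifSq' unifSq' := by
    rw [unifSq']; exact Measure.measurePreserving_swap
  have hSwp : MeasurePreserving Sw (uI.prod μm) (uI.prod μm) := by
    refine (MeasurePreserving.id uI).prod ?_
    exact measurePreserving_pi (fun _ : Fin m => unifSq') (fun _ => unifSq')
      (fun _ => hswap)
  set S2 := {p : ℝ × (Fin m → ℝ × ℝ) |
      stdz (Fin.snoc (fun j => (p.2 j).2) p.1) = g (fun j => (p.2 j).1)} with hS2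
  have hpre : Sw ⁻¹' S2 = {p : ℝ × (Fin m → ℝ × ℝ) |
      stdz (Fin.snoc (fun j => (p.2 j).1) p.1) = g (fun j => (p.2 j).2)} := by
    ext ⟨w, f⟩
    simp [hSw, hS2, Prod.swap]
  calc (uI.prod μm) S2 = (uI.prod μm) (Sw ⁻¹' S2) :=
        (hSwp.measure_preimage (measurableSet_coreS2 g hg).nullMeasurableSet).symm
    _ = (((m+1).factorial : ℝ≥0∞))⁻¹ := by rw [hpre]; exact core1 g hg

end Core

lemma unifSq_eq : unifSq = unifSq' := rfl

instance : IsProbabilityMeasure unifSq := by rw [unifSq_eq]; infer_instance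

section Psi
variable {m : ℕ}

lemma permOfPoints_eq_iff {n : ℕ} (X Y : Fin n → ℝ) (π : Equiv.Perm (Fin n)) :
    permOfPoints X Y = π ↔ stdz X = π⁻¹ * stdz Y := by
  unfold permOfPoints
  constructor
  · intro h; rw [← h]; group
  · intro h; rw [h]; group

/-- the big event set, jointly in `(z, f)` -/
def bigS (m : ℕ) (π : Equiv.Perm (Fin (m+1))) : Set ((ℝ × ℝ) × (Fin m → ℝ × ℝ)) :=
  {q | permOfPoints (Fin.snoc (fun j => (q.2 j).1) q.1.1)
      (Fin.snoc (fun j => (q.2 j).2) q.1.2) = π}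

lemma measurableSet_permOfPoints_eq {n : ℕ} (π : Equiv.Perm (Fin n)) :
    MeasurableSet {q : (Fin n → ℝ) × (Fin n → ℝ) | permOfPoints q.1 q.2 = π} := by
  have : {q : (Fin n → ℝ) × (Fin n → ℝ) | permOfPoints q.1 q.2 = π}
      = ⋃ σ : Equiv.Perm (Fin n), ({X | stdz X = π⁻¹ * σ} ×ˢ {Y | stdz Y = σ}) := by
    ext ⟨X, Y⟩
    simp only [Set.mem_setOf_eq, Set.mem_iUnion, Set.mem_prod, permOfPoints_eq_iff]
    constructor
    · intro h; exact ⟨stdz Y, h, rfl⟩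
    · rintro ⟨σ, h1, h2⟩; rw [h1, h2]
  rw [this]
  exact MeasurableSet.iUnion fun σ =>
    (measurableSet_stdz_eq _).prod (measurableSet_stdz_eq _)

lemma measurable_bigMap : Measurable (fun q : (ℝ × ℝ) × (Fin m → ℝ × ℝ) =>
    (((Fin.snoc (fun j => (q.2 j).1) q.1.1 : Fin (m+1) → ℝ)),
      ((Fin.snoc (fun j => (q.2 j).2) q.1.2 : Fin (m+1) → ℝ)))) := by
  refine Measurable.prodMk ?_ ?_
  · have hin : Measurable (fun q : (ℝ × ℝ) × (Fin m → ℝ × ℝ) =>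
        ((q.1.1, fun j => (q.2 j).1) : ℝ × (Fin m → ℝ))) :=
      (measurable_fst.comp measurable_fst).prodMk
        (measurable_pi_lambda _ fun j => measurable_fst.comp
          ((measurable_pi_apply j).comp measurable_snd))
    exact measurable_snocfun.comp hin
  · have hin : Measurable (fun q : (ℝ × ℝ) × (Fin m → ℝ × ℝ) =>
        ((q.1.2, fun j => (q.2 j).2) : ℝ × (Fin m → ℝ))) :=
      (measurable_snd.comp measurable_fst).prodMk
        (measurable_pi_lambda _ fun j => measurable_snd.comp
          ((measurable_pi_apply j).comp measurable_snd))
    exact measurable_snocfun.comp hin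

lemma measurableSet_bigS (π : Equiv.Perm (Fin (m+1))) : MeasurableSet (bigS m π) :=
  measurable_bigMap (measurableSet_permOfPoints_eq π)

lemma measurable_psi (π : Equiv.Perm (Fin (m+1))) : Measurable (psi m π) := by
  have h : Measurable fun z : ℝ × ℝ =>
      (Measure.pi fun _ : Fin m => unifSq) (Prod.mk z ⁻¹' bigS m π) :=
    measurable_measure_prodMk_left (measurableSet_bigS π)
  exact ENNReal.measurable_toReal.comp h

lemma psi_nonneg (π : Equiv.Perm (Fin (m+1))) (z : ℝ × ℝ) : 0 ≤ psi m π z :=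
  ENNReal.toReal_nonneg

lemma psi_le_one (π : Equiv.Perm (Fin (m+1))) (z : ℝ × ℝ) : psi m π z ≤ 1 := by
  rw [psi]
  have h : (Measure.pi fun _ : Fin m => unifSq)
      {f | permOfPoints (Fin.snoc (fun j => (f j).1) z.1)
        (Fin.snoc (fun j => (f j).2) z.2) = π} ≤ 1 := by
    rw [unifSq_eq]
    exact prob_le_one
  calc ((Measure.pi fun _ : Fin m => unifSq) _).toReal ≤ (1 : ℝ≥0∞).toReal :=
        ENNReal.toReal_mono (by simp) h
    _ = 1 := by simp

/-- slice integral over the x-coordinate of the extra point -/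
lemma int_psi_fst (π : Equiv.Perm (Fin (m+1))) (v : ℝ) :
    ∫ u, psi m π (u, v) ∂uI = (((m+1).factorial : ℝ))⁻¹ := by
  set μm := Measure.pi (fun _ : Fin m => unifSq') with hμm
  set g : (Fin m → ℝ) → Equiv.Perm (Fin (m+1)) :=
    fun y => π⁻¹ * stdz (Fin.snoc y v) with hgdef
  have hg : ∀ σ, MeasurableSet {y : Fin m → ℝ | g y = σ} := by
    intro σ
    have : {y : Fin m → ℝ | g y = σ}
        = (fun y : Fin m → ℝ => (Fin.snoc y v : Fin (m+1) → ℝ)) ⁻¹'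
            {Y | stdz Y = π * σ} := by
      ext y
      simp only [Set.mem_setOf_eq, Set.mem_preimage, hgdef]
      constructor
      · intro h; rw [← h]; group
      · intro h; rw [h]; group
    rw [this]
    exact measurable_snoc_const v (measurableSet_stdz_eq _)
  set S₁ := {p : ℝ × (Fin m → ℝ × ℝ) |
      stdz (Fin.snoc (fun j => (p.2 j).1) p.1) = g (fun j => (p.2 j).2)} with hS₁def
  have hS₁m : MeasurableSet S₁ := measurableSet_coreS g hg
  have hset : ∀ u : ℝ, {f : Fin m → ℝ × ℝ |
      permOfPoints (Fin.snoc (fun j => (f j).1) u)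
        (Fin.snoc (fun j => (f j).2) v) = π} = Prod.mk u ⁻¹' S₁ := by
    intro u
    ext f
    simp only [Set.mem_setOf_eq, Set.mem_preimage, hS₁def, permOfPoints_eq_iff, hgdef]
  have hfun : (fun u => psi m π (u, v)) = fun u => (μm (Prod.mk u ⁻¹' S₁)).toReal := by
    funext u
    rw [psi, unifSq_eq]
    congr 1
    exact congrArg μm (hset u)
  rw [hfun]
  have hmeasF : Measurable fun u => μm (Prod.mk u ⁻¹' S₁) :=
    measurable_measure_prodMk_left hS₁m
  rw [integral_toReal hmeasF.aemeasurable ?_]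
  · rw [← Measure.prod_apply hS₁m, core1 g hg]
    simp [ENNReal.toReal_inv]
  · refine Filter.Eventually.of_forall fun u => ?_
    exact lt_of_le_of_lt prob_le_one (by simp)

/-- slice integral over the y-coordinate of the extra point -/
lemma int_psi_snd (ρ : Equiv.Perm (Fin (m+1))) (v : ℝ) :
    ∫ w, psi m ρ (v, w) ∂uI = (((m+1).factorial : ℝ))⁻¹ := by
  set μm := Measure.pi (fun _ : Fin m => unifSq') with hμm
  set g : (Fin m → ℝ) → Equiv.Perm (Fin (m+1)) :=
    fun x => ρ * stdz (Fin.snoc x v) with hgdef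
  have hg : ∀ σ, MeasurableSet {x : Fin m → ℝ | g x = σ} := by
    intro σ
    have : {x : Fin m → ℝ | g x = σ}
        = (fun x : Fin m → ℝ => (Fin.snoc x v : Fin (m+1) → ℝ)) ⁻¹'
            {X | stdz X = ρ⁻¹ * σ} := by
      ext x
      simp only [Set.mem_setOf_eq, Set.mem_preimage, hgdef]
      constructor
      · intro h; rw [← h]; group
      · intro h; rw [h]; group
    rw [this]
    exact measurable_snoc_const v (measurableSet_stdz_eq _)
  set S₂ := {p : ℝ × (Fin m → ℝ × ℝ) |
      stdz (Fin.snoc (fun j => (p.2 j).2) p.1) = g (fun j => (p.2 j).1)} with hS₂def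
  have hS₂m : MeasurableSet S₂ := measurableSet_coreS2 g hg
  have hset : ∀ w : ℝ, {f : Fin m → ℝ × ℝ |
      permOfPoints (Fin.snoc (fun j => (f j).1) v)
        (Fin.snoc (fun j => (f j).2) w) = ρ} = Prod.mk w ⁻¹' S₂ := by
    intro w
    ext f
    simp only [Set.mem_setOf_eq, Set.mem_preimage, hS₂def, hgdef]
    unfold permOfPoints
    constructor
    · intro h; rw [← h]; group
    · intro h; rw [h]; group
  have hfun : (fun w => psi m ρ (v, w)) = fun w => (μm (Prod.mk w ⁻¹' S₂)).toReal := by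
    funext w
    rw [psi, unifSq_eq]
    congr 1
    exact congrArg μm (hset w)
  rw [hfun]
  have hmeasF : Measurable fun w => μm (Prod.mk w ⁻¹' S₂) :=
    measurable_measure_prodMk_left hS₂m
  rw [integral_toReal hmeasF.aemeasurable ?_]
  · rw [← Measure.prod_apply hS₂m, core2 g hg]
    simp [ENNReal.toReal_inv]
  · refine Filter.Eventually.of_forall fun w => ?_
    exact lt_of_le_of_lt prob_le_one (by simp)

lemma integrable_psi_prod (π : Equiv.Perm (Fin (m+1))) (θ : Measure (ℝ × ℝ))
    [IsProbabilityMeasure θ] : Integrable (psi m π) θ := by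
  refine ⟨(measurable_psi π).aestronglyMeasurable, ?_⟩
  refine HasFiniteIntegral.of_bounded (C := 1) ?_
  refine Filter.Eventually.of_forall fun z => ?_
  rw [Real.norm_eq_abs, abs_of_nonneg (psi_nonneg π z)]
  exact psi_le_one π z

lemma int_psi_total (π : Equiv.Perm (Fin (m+1))) :
    ∫ z, psi m π z ∂(uI.prod uI) = (((m+1).factorial : ℝ))⁻¹ := by
  rw [integral_prod_symm _ (integrable_psi_prod π (uI.prod uI))]
  have : ∀ v : ℝ, ∫ u, psi m π (u, v) ∂uI = (((m+1).factorial : ℝ))⁻¹ :=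
    int_psi_fst π
  simp only [this]
  simp

end Psi

lemma integrable_bdd {α : Type*} [MeasurableSpace α] (θ : Measure α) [IsFiniteMeasure θ]
    {f : α → ℝ} (hf : Measurable f) (h0 : ∀ x, 0 ≤ f x) (h1 : ∀ x, f x ≤ 1) :
    Integrable f θ := by
  refine ⟨hf.aestronglyMeasurable, ?_⟩
  refine HasFiniteIntegral.of_bounded (C := 1) ?_
  refine Filter.Eventually.of_forall fun z => ?_
  rw [Real.norm_eq_abs, abs_of_nonneg (h0 z)]
  exact h1 z

/-- For `U, V, W` i.i.d. `Uniform[0,1]`,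
`Cov(ψ_π(U,V), ψ_ρ(V,W)) = 0`; in particular `E[ψ_π(U,V) | V] = 1/r!` almost surely. -/
theorem stmt16 {Ω : Type*} [MeasurableSpace Ω] (μ : Measure Ω) [IsProbabilityMeasure μ]
    (m : ℕ) (π ρ : Equiv.Perm (Fin (m+1)))
    (T : Fin 3 → Ω → ℝ) (hmeas : ∀ i, Measurable (T i))
    (hindep : iIndepFun T μ)
    (hlaw : ∀ i, Measure.map (T i) μ = volume.restrict (Set.Icc (0:ℝ) 1)) :
    (∫ ω, psi m π (T 0 ω, T 1 ω) * psi m ρ (T 1 ω, T 2 ω) ∂μ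
      = (∫ ω, psi m π (T 0 ω, T 1 ω) ∂μ) * ∫ ω, psi m ρ (T 1 ω, T 2 ω) ∂μ) ∧
    (μ[(fun ω => psi m π (T 0 ω, T 1 ω)) |
        MeasurableSpace.comap (T 1) (inferInstance : MeasurableSpace ℝ)]
      =ᵐ[μ] fun _ => ((Nat.factorial (m+1) : ℝ))⁻¹) := by
  have hlaw' : ∀ i, Measure.map (T i) μ = uI := hlaw
  set c : ℝ := ((Nat.factorial (m+1) : ℝ))⁻¹ with hc
  -- joint laws
  have hpair01 : Measure.map (fun ω => (T 0 ω, T 1 ω)) μ = uI.prod uI := by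
    have h01 : IndepFun (T 0) (T 1) μ := hindep.indepFun (by decide)
    rw [(indepFun_iff_map_prod_eq_prod_map_map (hmeas 0).aemeasurable
      (hmeas 1).aemeasurable).1 h01, hlaw' 0, hlaw' 1]
  have hpair12 : Measure.map (fun ω => (T 1 ω, T 2 ω)) μ = uI.prod uI := by
    have h12 : IndepFun (T 1) (T 2) μ := hindep.indepFun (by decide)
    rw [(indepFun_iff_map_prod_eq_prod_map_map (hmeas 1).aemeasurable
      (hmeas 2).aemeasurable).1 h12, hlaw' 1, hlaw' 2]
  have htrip : Measure.map (fun ω => (T 0 ω, (T 1 ω, T 2 ω))) μ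
      = uI.prod (uI.prod uI) := by
    have h0_12 : IndepFun (T 0) (fun ω => (T 1 ω, T 2 ω)) μ :=
      (hindep.indepFun_prodMk hmeas 1 2 0 (by decide) (by decide)).symm
    rw [(indepFun_iff_map_prod_eq_prod_map_map (hmeas 0).aemeasurable
      ((hmeas 1).prodMk (hmeas 2)).aemeasurable).1 h0_12, hlaw' 0, hpair12]
  -- the two marginal expectations
  have hE1 : ∫ ω, psi m π (T 0 ω, T 1 ω) ∂μ = c := by
    rw [← integral_map ((hmeas 0).prodMk (hmeas 1)).aemeasurable
      (measurable_psi π).aestronglyMeasurable, hpair01, int_psi_total]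
  have hE2 : ∫ ω, psi m ρ (T 1 ω, T 2 ω) ∂μ = c := by
    rw [← integral_map ((hmeas 1).prodMk (hmeas 2)).aemeasurable
      (measurable_psi ρ).aestronglyMeasurable, hpair12, int_psi_total]
  constructor
  · -- covariance part
    set F : ℝ × (ℝ × ℝ) → ℝ := fun p => psi m π (p.1, p.2.1) * psi m ρ p.2 with hF
    have hFmeas : Measurable F := by
      refine Measurable.mul ?_ ?_
      · exact (measurable_psi π).comp (measurable_fst.prodMk
          (measurable_fst.comp measurable_snd))
      · exact (measurable_psi ρ).comp measurable_snd
    have hF0 : ∀ p, 0 ≤ F p := fun p => mul_nonneg (psi_nonneg _ _) (psi_nonneg _ _)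
    have hF1 : ∀ p, F p ≤ 1 := fun p =>
      mul_le_one₀ (psi_le_one _ _) (psi_nonneg _ _) (psi_le_one _ _)
    have hLHS : ∫ ω, psi m π (T 0 ω, T 1 ω) * psi m ρ (T 1 ω, T 2 ω) ∂μ
        = ∫ p, F p ∂(uI.prod (uI.prod uI)) := by
      rw [← htrip, integral_map ((hmeas 0).prodMk
        ((hmeas 1).prodMk (hmeas 2))).aemeasurable hFmeas.aestronglyMeasurable]
    have hFint : Integrable F (uI.prod (uI.prod uI)) :=
      integrable_bdd _ hFmeas hF0 hF1
    have step1 : ∫ p, F p ∂(uI.prod (uI.prod uI))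
        = ∫ u, ∫ q, F (u, q) ∂(uI.prod uI) ∂uI := integral_prod F hFint
    have inner : ∀ u : ℝ, ∫ q, F (u, q) ∂(uI.prod uI)
        = c * ∫ v, psi m π (u, v) ∂uI := by
      intro u
      have hint : Integrable (fun q : ℝ × ℝ => F (u, q)) (uI.prod uI) := by
        refine integrable_bdd _ ?_ (fun q => hF0 _) (fun q => hF1 _)
        exact ((measurable_psi π).comp (measurable_const.prodMk measurable_fst)).mul
          ((measurable_psi ρ).comp measurable_id)
      rw [integral_prod _ hint]
      have : ∀ v : ℝ, ∫ w, F (u, (v, w)) ∂uI = psi m π (u, v) * c := by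
        intro v
        simp only [hF]
        rw [integral_const_mul, int_psi_snd]
      simp only [this]
      rw [integral_mul_const]
      ring
    have swap : ∫ u, ∫ v, psi m π (u, v) ∂uI ∂uI = c := by
      rw [← integral_prod _ (integrable_psi_prod π (uI.prod uI)), int_psi_total]
    calc ∫ ω, psi m π (T 0 ω, T 1 ω) * psi m ρ (T 1 ω, T 2 ω) ∂μ
        = ∫ u, ∫ q, F (u, q) ∂(uI.prod uI) ∂uI := by rw [hLHS, step1]
      _ = ∫ u, c * ∫ v, psi m π (u, v) ∂uI ∂uI := by simp only [inner]
      _ = c * ∫ u, ∫ v, psi m π (u, v) ∂uI ∂uI := integral_const_mul c _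
      _ = c * c := by rw [swap]
      _ = (∫ ω, psi m π (T 0 ω, T 1 ω) ∂μ) * ∫ ω, psi m ρ (T 1 ω, T 2 ω) ∂μ := by
          rw [hE1, hE2]
  · -- conditional expectation part
    have hm : MeasurableSpace.comap (T 1) (inferInstance : MeasurableSpace ℝ)
        ≤ (inferInstance : MeasurableSpace Ω) := (hmeas 1).comap_le
    have hsf : SigmaFinite (μ.trim hm) := by infer_instance
    set f : Ω → ℝ := fun ω => psi m π (T 0 ω, T 1 ω) with hfdef
    have hfmeas : Measurable f :=
      (measurable_psi π).comp ((hmeas 0).prodMk (hmeas 1))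
    have hfint : Integrable f μ :=
      integrable_bdd μ hfmeas (fun ω => psi_nonneg _ _) (fun ω => psi_le_one _ _)
    refine (ae_eq_condExp_of_forall_setIntegral_eq hm hfint ?_ ?_ ?_).symm
    · intro s _ hs
      exact integrableOn_const hs.ne
    · rintro s ⟨t, ht, rfl⟩ -
      -- RHS : ∫ over the preimage
      have hpre : T 1 ⁻¹' t = (fun ω => (T 0 ω, T 1 ω)) ⁻¹' (Set.univ ×ˢ t) := by
        ext ω; simp
      have hr : ∫ x in T 1 ⁻¹' t, f x ∂μ
          = ∫ z in Set.univ ×ˢ t, psi m π z ∂(uI.prod uI) := by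
        rw [hpre, ← hpair01]
        rw [setIntegral_map (MeasurableSet.univ.prod ht)
          (measurable_psi π).aestronglyMeasurable
          ((hmeas 0).prodMk (hmeas 1)).aemeasurable]
      have hres : (uI.prod uI).restrict (Set.univ ×ˢ t) = uI.prod (uI.restrict t) := by
        rw [← Measure.prod_restrict, Measure.restrict_univ]
      have hfin : IsFiniteMeasure (uI.prod (uI.restrict t)) := by infer_instance
      have hrr : ∫ z in Set.univ ×ˢ t, psi m π z ∂(uI.prod uI)
          = ∫ v, (∫ u, psi m π (u, v) ∂uI) ∂(uI.restrict t) := by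
        rw [show (∫ z in Set.univ ×ˢ t, psi m π z ∂(uI.prod uI))
          = ∫ z, psi m π z ∂((uI.prod uI).restrict (Set.univ ×ˢ t)) from rfl, hres]
        exact integral_prod_symm _ (integrable_bdd _ (measurable_psi π)
          (psi_nonneg π) (psi_le_one π))
      have hconst : ∫ v, (∫ u, psi m π (u, v) ∂uI) ∂(uI.restrict t) = c * (uI t).toReal := by
        have : ∀ v : ℝ, ∫ u, psi m π (u, v) ∂uI = c := int_psi_fst π
        simp only [this]
        rw [integral_const]
        simp [Measure.restrict_apply_univ, mul_comm, Measure.real]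
      have hμt : μ (T 1 ⁻¹' t) = uI t := by
        rw [← Measure.map_apply (hmeas 1) ht, hlaw' 1]
      rw [hr, hrr, hconst, setIntegral_const, Measure.real, hμt, smul_eq_mul, mul_comm]
    · exact StronglyMeasurable.aestronglyMeasurable stronglyMeasurable_const
end

section
/- Fix r ≥ 1 and π ∈ S_r. Let Ẑ₁,…,Ẑ_{r−1} be i.i.d. uniform on [0,1]² and define ψ_π(u,v) := P(perm(Ẑ₁,…,Ẑ_{r−1},(u,v)) = π). Then for all (u,v) ∈ [0,1]², ψ_π(u,v) = (1/(r−1)!) · Σ_{i=1}^{r} g_i(u)·g_{π(i)}(v), where g_j(w) := C(r−1, j−1)·w^{j−1}·(1−w)^{r−j}. -/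
open MeasureTheory Set Function Finset ENNReal


/-- The Bernstein basis polynomial `g_j(w) = C(m, j) wʲ (1−w)^{m−j}` (0-indexed; with
`r = m+1`, this is `g_{j+1}` of the paper). -/
noncomputable def bern (m : ℕ) (j : Fin (m+1)) (w : ℝ) : ℝ :=
  (m.choose (j : ℕ)) * w ^ (j : ℕ) * (1 - w) ^ (m - (j : ℕ))

namespace Stmt17


noncomputable def mu : Measure ℝ := volume.restrict (Set.Icc (0:ℝ) 1)

instance : IsProbabilityMeasure mu := ⟨by simp [mu, Real.volume_Icc]⟩

instance : NullSingletonClass mu := by unfold mu; infer_instance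

noncomputable def nu (m : ℕ) : Measure (Fin m → ℝ) := Measure.pi fun _ => mu

instance (m : ℕ) : IsProbabilityMeasure (nu m) := by unfold nu; infer_instance

lemma mu_Iio {u : ℝ} (h0 : 0 ≤ u) (h1 : u ≤ 1) : mu (Set.Iio u) = ENNReal.ofReal u := by
  rw [mu, Measure.restrict_apply measurableSet_Iio]
  have : Set.Iio u ∩ Set.Icc 0 1 = Set.Ico 0 u := by
    ext t; simp only [Set.mem_inter_iff, Set.mem_Iio, Set.mem_Icc, Set.mem_Ico]
    constructor
    · rintro ⟨h, h2, h3⟩; exact ⟨h2, h⟩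
    · rintro ⟨h2, h⟩; exact ⟨h, h2, le_trans h.le h1⟩
  rw [this, Real.volume_Ico, sub_zero]

lemma mu_Ici {u : ℝ} (h0 : 0 ≤ u) (h1 : u ≤ 1) : mu (Set.Ici u) = ENNReal.ofReal (1 - u) := by
  rw [mu, Measure.restrict_apply measurableSet_Ici]
  have : Set.Ici u ∩ Set.Icc 0 1 = Set.Icc u 1 := by
    ext t; simp only [Set.mem_inter_iff, Set.mem_Ici, Set.mem_Icc]
    constructor
    · rintro ⟨h, h2, h3⟩; exact ⟨h, h3⟩
    · rintro ⟨h, h3⟩; exact ⟨h, le_trans h0 h, h3⟩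
  rw [this, Real.volume_Icc]

/-- The diagonal `{x | x a = x b}` is null for the product measure. -/
lemma nu_diag (m : ℕ) {a b : Fin m} (hab : a ≠ b) :
    nu m {x | x a = x b} = 0 := by
  classical
  set p : Fin m → Prop := fun i => i = a with hp
  have e := MeasureTheory.measurePreserving_piEquivPiSubtypeProd
    (α := fun _ : Fin m => ℝ) (fun _ => mu) p
  set T : Set ((∀ i : {i // p i}, ℝ) × (∀ i : {i // ¬ p i}, ℝ)) :=
    {yz | yz.1 ⟨a, rfl⟩ = yz.2 ⟨b, hab.symm⟩} with hT
  have hTm : MeasurableSet T := by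
    apply measurableSet_eq_fun
    · exact (measurable_pi_apply _).comp measurable_fst
    · exact (measurable_pi_apply _).comp measurable_snd
  have hpre : (MeasurableEquiv.piEquivPiSubtypeProd (fun _ : Fin m => ℝ) p) ⁻¹' T
      = {x | x a = x b} := by
    ext x
    simp [T, MeasurableEquiv.piEquivPiSubtypeProd, Equiv.piEquivPiSubtypeProd]
  have := e.measure_preimage hTm.nullMeasurableSet
  rw [hpre] at this
  rw [show nu m = Measure.pi fun _ : Fin m => mu from rfl, this]
  rw [Measure.prod_apply hTm]
  have : ∀ y : (∀ i : {i // p i}, ℝ),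
      (Measure.pi fun _ : {i // ¬ p i} => mu) (Prod.mk y ⁻¹' T) = 0 := by
    intro y
    have : Prod.mk y ⁻¹' T = {z : ∀ i : {i // ¬ p i}, ℝ | z ⟨b, hab.symm⟩ = y ⟨a, rfl⟩} := by
      ext z; simp [T, eq_comm]
    rw [this]
    exact Measure.pi_hyperplane (fun _ : {i // ¬ p i} => mu) ⟨b, hab.symm⟩ _
  simp [this]

/-- Hyperplanes `{x | x a = u}` are null. -/
lemma nu_hyper (m : ℕ) (a : Fin m) (u : ℝ) : nu m {x | x a = u} = 0 :=
  Measure.pi_hyperplane (fun _ : Fin m => mu) a u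

/-- A measurable null superset of the non-injectivity locus. -/
def Nset (m : ℕ) (u : ℝ) : Set (Fin m → ℝ) :=
  (⋃ (a : Fin m) (b : Fin m) (_ : a ≠ b), {x | x a = x b}) ∪ ⋃ a : Fin m, {x | x a = u}

lemma measurableSet_Nset (m : ℕ) (u : ℝ) : MeasurableSet (Nset m u) := by
  apply MeasurableSet.union
  · exact MeasurableSet.iUnion fun a => MeasurableSet.iUnion fun b =>
      MeasurableSet.iUnion fun _ =>
        measurableSet_eq_fun (measurable_pi_apply a) (measurable_pi_apply b)
  · exact MeasurableSet.iUnion fun a =>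
      measurableSet_eq_fun (measurable_pi_apply a) measurable_const

lemma nu_Nset (m : ℕ) (u : ℝ) : nu m (Nset m u) = 0 := by
  apply measure_union_null
  · refine measure_iUnion_null fun a => measure_iUnion_null fun b => measure_iUnion_null ?_
    intro hab
    exact nu_diag m hab
  · exact measure_iUnion_null fun a => nu_hyper m a u

lemma mem_Nset_of_not_injective {m : ℕ} {u : ℝ} {x : Fin m → ℝ}
    (h : ¬ Function.Injective (Fin.snoc x u : Fin (m+1) → ℝ)) : x ∈ Nset m u := by
  simp only [Function.Injective, not_forall] at h
  obtain ⟨a, b, hab, hne⟩ := h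
  induction a using Fin.lastCases with
  | last =>
      induction b using Fin.lastCases with
      | last => exact absurd rfl hne
      | cast b =>
          simp only [Fin.snoc_last, Fin.snoc_castSucc] at hab
          exact Or.inr (Set.mem_iUnion.mpr ⟨b, hab.symm⟩)
  | cast a =>
      induction b using Fin.lastCases with
      | last =>
          simp only [Fin.snoc_last, Fin.snoc_castSucc] at hab
          exact Or.inr (Set.mem_iUnion.mpr ⟨a, hab⟩)
      | cast b =>
          simp only [Fin.snoc_castSucc] at hab
          have : a ≠ b := fun hc => hne (by rw [hc])
          exact Or.inl (Set.mem_iUnion.mpr ⟨a, Set.mem_iUnion.mpr ⟨b,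
            Set.mem_iUnion.mpr ⟨this, hab⟩⟩⟩)





/-- The order region: `snoc x u` is strictly increasing along `σ⁻¹`. -/
def A (m : ℕ) (u : ℝ) (σ : Equiv.Perm (Fin (m+1))) : Set (Fin m → ℝ) :=
  {x | StrictMono (Fin.snoc x u ∘ ⇑σ⁻¹)}

lemma measurable_snoc_eval (m : ℕ) (u : ℝ) (j : Fin (m+1)) :
    Measurable fun x : Fin m → ℝ => (Fin.snoc x u : Fin (m+1) → ℝ) j := by
  induction j using Fin.lastCases with
  | last => simp only [Fin.snoc_last]; exact measurable_const
  | cast j => simp only [Fin.snoc_castSucc]; exact measurable_pi_apply j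

lemma measurableSet_A (m : ℕ) (u : ℝ) (σ : Equiv.Perm (Fin (m+1))) :
    MeasurableSet (A m u σ) := by
  have : A m u σ = ⋂ k : Fin m,
      {x | (Fin.snoc x u : Fin (m+1) → ℝ) (σ⁻¹ k.castSucc)
        < (Fin.snoc x u : Fin (m+1) → ℝ) (σ⁻¹ k.succ)} := by
    ext x
    simp only [A, mem_setOf_eq, Set.mem_iInter, Fin.strictMono_iff_lt_succ, comp_apply]
  rw [this]
  exact MeasurableSet.iInter fun k =>
    measurableSet_lt (measurable_snoc_eval ..) (measurable_snoc_eval ..)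



/-- If `f ∘ σ⁻¹` is strictly monotone then `(Tuple.sort f)⁻¹ = σ`. -/
lemma stdz_eq {n : ℕ} {f : Fin n → ℝ} {σ : Equiv.Perm (Fin n)}
    (h : StrictMono (f ∘ ⇑σ⁻¹)) : (Tuple.sort f)⁻¹ = σ := by
  have : σ⁻¹ = Tuple.sort f := by
    rw [Tuple.eq_sort_iff]
    refine ⟨h.monotone, fun i j hij hf => ?_⟩
    exact absurd hf (h hij).ne
  rw [← this, inv_inv]

lemma strictMono_of_injective_sort {n : ℕ} {f : Fin n → ℝ} (hf : Function.Injective f) :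
    StrictMono (f ∘ ⇑((Tuple.sort f)⁻¹)⁻¹) := by
  rw [inv_inv]
  exact (Tuple.monotone_sort f).strictMono_of_injective
    (hf.comp (Equiv.injective _))

/-- A member of `A` has `snoc x u` injective. -/
lemma injective_of_A {n : ℕ} {f : Fin n → ℝ} {σ : Equiv.Perm (Fin n)}
    (h : StrictMono (f ∘ ⇑σ⁻¹)) : Function.Injective f := by
  have h2 : f = (f ∘ ⇑σ⁻¹) ∘ ⇑σ := by ext j; simp
  rw [h2]
  exact h.injective.comp σ.injective

/-- rank of the last element: if `snoc x u ∘ σ⁻¹` is strictly monotone then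
`σ (last)` equals the number of coordinates of `x` below `u`. -/
lemma rank_last {m : ℕ} {x : Fin m → ℝ} {u : ℝ} {σ : Equiv.Perm (Fin (m+1))}
    (h : StrictMono ((Fin.snoc x u : Fin (m+1) → ℝ) ∘ ⇑σ⁻¹)) :
    (σ (Fin.last m) : ℕ) = (Finset.univ.filter fun j : Fin m => x j < u).card := by
  classical
  set g : Fin (m+1) → ℝ := Fin.snoc x u with hg
  have key : ∀ j : Fin (m+1), g j < u ↔ σ j < σ (Fin.last m) := by
    intro j
    have hu : g (Fin.last m) = u := Fin.snoc_last _ _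
    rw [← hu]
    constructor
    · intro hj
      by_contra hc
      push_neg at hc
      rcases eq_or_lt_of_le hc with hc | hc
      · have := σ.injective hc.symm ▸ hj
        rw [σ.injective hc.symm] at hj; exact lt_irrefl _ hj
      · have := h (a := σ (Fin.last m)) (b := σ j) hc
        simp only [comp_apply, Equiv.Perm.coe_inv, Equiv.symm_apply_apply] at this
        exact absurd hj (not_lt.mpr this.le)
    · intro hj
      have := h hj
      simpa only [comp_apply, Equiv.Perm.coe_inv, Equiv.symm_apply_apply] using this
  have e1 : (Finset.univ.filter fun j : Fin (m+1) => g j < u)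
      = Finset.univ.filter fun j => σ j < σ (Fin.last m) := by
    apply Finset.filter_congr; intro j _; simpa using key j
  have e2 : (Finset.univ.filter fun j : Fin (m+1) => σ j < σ (Fin.last m)).card
      = (σ (Fin.last m) : ℕ) := by
    rw [← Fin.card_Iio (b := σ (Fin.last m))]
    apply Finset.card_nbij (fun j => σ j)
    · intro a ha; simp only [Finset.mem_coe, Finset.mem_filter, Finset.mem_univ, true_and] at ha ⊢; exact Finset.mem_Iio.mpr ha
    · intro a ha b hb hab; exact σ.injective hab
    · intro b hb
      simp only [Finset.coe_filter, Finset.mem_univ, true_and, mem_setOf_eq,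
        Finset.coe_Iio, Set.mem_Iio, Set.mem_image] at hb ⊢
      exact ⟨σ⁻¹ b, by simpa using hb, by simp⟩
  have e3 : (Finset.univ.filter fun j : Fin (m+1) => g j < u).card
      = (Finset.univ.filter fun j : Fin m => x j < u).card := by
    rw [Finset.card_filter, Finset.card_filter, Fin.sum_univ_castSucc]
    simp [hg]
  rw [← e3, e1, e2]



/-- Extend a permutation of `Fin m` to `Fin (m+1)` fixing `last`. -/
def extL {m : ℕ} (ρ : Equiv.Perm (Fin m)) : Equiv.Perm (Fin (m+1)) where
  toFun := Fin.snoc (fun j => (ρ j).castSucc) (Fin.last m)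
  invFun := Fin.snoc (fun j => (ρ⁻¹ j).castSucc) (Fin.last m)
  left_inv := by
    intro j
    induction j using Fin.lastCases with
    | last => simp
    | cast j => simp
  right_inv := by
    intro j
    induction j using Fin.lastCases with
    | last => simp
    | cast j => simp

@[simp] lemma extL_last {m : ℕ} (ρ : Equiv.Perm (Fin m)) :
    extL ρ (Fin.last m) = Fin.last m := by simp [extL]

@[simp] lemma extL_castSucc {m : ℕ} (ρ : Equiv.Perm (Fin m)) (j : Fin m) :
    extL ρ j.castSucc = (ρ j).castSucc := by simp [extL]

lemma ne_last_of_castSucc {m : ℕ} {κ : Equiv.Perm (Fin (m+1))}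
    (h : κ (Fin.last m) = Fin.last m) (j : Fin m) : κ j.castSucc ≠ Fin.last m := by
  intro hc
  have := κ.injective (hc.trans h.symm)
  exact absurd this (Fin.castSucc_lt_last j).ne

lemma inv_fix {m : ℕ} {κ : Equiv.Perm (Fin (m+1))}
    (h : κ (Fin.last m) = Fin.last m) : κ⁻¹ (Fin.last m) = Fin.last m := by
  conv_lhs => rw [← h]
  simp

/-- Restrict a permutation of `Fin (m+1)` fixing `last` to `Fin m`. -/
def resL {m : ℕ} (κ : Equiv.Perm (Fin (m+1))) (h : κ (Fin.last m) = Fin.last m) :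
    Equiv.Perm (Fin m) where
  toFun j := (κ j.castSucc).castPred (ne_last_of_castSucc h j)
  invFun j := (κ⁻¹ j.castSucc).castPred (ne_last_of_castSucc (inv_fix h) j)
  left_inv := by intro j; apply Fin.castSucc_injective; simp
  right_inv := by intro j; apply Fin.castSucc_injective; simp

@[simp] lemma castSucc_resL {m : ℕ} (κ : Equiv.Perm (Fin (m+1)))
    (h : κ (Fin.last m) = Fin.last m) (j : Fin m) :
    ((resL κ h) j).castSucc = κ j.castSucc := by simp [resL]

lemma snoc_comp_resL {m : ℕ} (κ : Equiv.Perm (Fin (m+1)))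
    (h : κ (Fin.last m) = Fin.last m) (x : Fin m → ℝ) (u : ℝ) :
    (Fin.snoc x u : Fin (m+1) → ℝ) ∘ ⇑κ = Fin.snoc (x ∘ ⇑(resL κ h)) u := by
  ext j
  induction j using Fin.lastCases with
  | last => simp [h]
  | cast j =>
      simp only [comp_apply, Fin.snoc_castSucc]
      rw [← castSucc_resL κ h j, Fin.snoc_castSucc]

lemma resL_extL {m : ℕ} (ρ : Equiv.Perm (Fin m)) :
    resL (extL ρ) (extL_last ρ) = ρ := by
  ext j
  simp [resL]

lemma extL_resL {m : ℕ} (κ : Equiv.Perm (Fin (m+1))) (h : κ (Fin.last m) = Fin.last m) :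
    extL (resL κ h) = κ := by
  ext j
  induction j using Fin.lastCases with
  | last => simp [h]
  | cast j => rw [extL_castSucc]; simp

/-- The fiber `{σ | σ (last) = i}` is in bijection with `Perm (Fin m)`. -/
noncomputable def fiberEquiv (m : ℕ) (i : Fin (m+1)) :
    Equiv.Perm (Fin m) ≃ {σ : Equiv.Perm (Fin (m+1)) // σ (Fin.last m) = i} where
  toFun ρ := ⟨Equiv.swap (Fin.last m) i * extL ρ, by simp [Equiv.swap_apply_left]⟩
  invFun σ := resL (Equiv.swap (Fin.last m) i * σ.1)
    (by simp [σ.2, Equiv.swap_apply_right])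
  left_inv ρ := by
    simp only [← mul_assoc, Equiv.swap_mul_self, one_mul]
    exact resL_extL ρ
  right_inv σ := by
    apply Subtype.ext
    simp only [extL_resL, ← mul_assoc, Equiv.swap_mul_self, one_mul]

lemma card_fiber (m : ℕ) (i : Fin (m+1)) :
    (Finset.univ.filter fun σ : Equiv.Perm (Fin (m+1)) => σ (Fin.last m) = i).card
      = Nat.factorial m := by
  classical
  rw [← Fintype.card_subtype, ← Fintype.card_congr (fiberEquiv m i)]
  simp [Fintype.card_perm]


def D (m : ℕ) (u : ℝ) (S : Finset (Fin m)) : Set (Fin m → ℝ) :=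
  Set.pi Set.univ (fun j => if j ∈ S then Set.Iio u else Set.Ici u)

lemma measurableSet_D (m : ℕ) (u : ℝ) (S : Finset (Fin m)) : MeasurableSet (D m u S) :=
  MeasurableSet.univ_pi fun j => by
    by_cases h : j ∈ S <;> simp [h, measurableSet_Iio, measurableSet_Ici]

lemma filter_eq_of_mem_D {m : ℕ} {u : ℝ} {S : Finset (Fin m)} {x : Fin m → ℝ}
    (hx : x ∈ D m u S) : Finset.univ.filter (fun j => x j < u) = S := by
  ext j
  have := hx j (Set.mem_univ j)
  by_cases h : j ∈ S
  · simp only [h, if_pos, Set.mem_Iio] at this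
    simp [h, this]
  · simp only [h, if_neg, not_false_iff, Set.mem_Ici] at this
    simp [h, not_lt.mpr this]

lemma nu_D {m : ℕ} {u : ℝ} (h0 : 0 ≤ u) (h1 : u ≤ 1) (S : Finset (Fin m)) :
    nu m (D m u S) = ENNReal.ofReal u ^ S.card * ENNReal.ofReal (1-u) ^ (m - S.card) := by
  classical
  rw [nu, D, Measure.pi_pi]
  have hmu : ∀ j : Fin m, mu (if j ∈ S then Set.Iio u else Set.Ici u)
      = if j ∈ S then ENNReal.ofReal u else ENNReal.ofReal (1-u) := fun j => by
    by_cases h : j ∈ S <;> simp [h, mu_Iio h0 h1, mu_Ici h0 h1]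
  simp only [hmu]
  rw [Finset.prod_ite, Finset.prod_const, Finset.prod_const]
  congr 1
  · congr 1
    simp [Finset.filter_mem_eq_inter]
  · congr 1
    have : filter (fun x => x ∉ S) Finset.univ = Finset.univ \ S := by
      ext j; simp
    rw [this, Finset.card_univ_diff]; simp

lemma nu_card_filter_eq {m : ℕ} {u : ℝ} (h0 : 0 ≤ u) (h1 : u ≤ 1) (i : ℕ) :
    nu m {x | (Finset.univ.filter fun j => x j < u).card = i}
      = (m.choose i) * (ENNReal.ofReal u ^ i * ENNReal.ofReal (1-u) ^ (m - i)) := by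
  classical
  have hun : {x : Fin m → ℝ | (Finset.univ.filter fun j => x j < u).card = i}
      = ⋃ S ∈ Finset.powersetCard i (Finset.univ : Finset (Fin m)), D m u S := by
    ext x
    simp only [mem_setOf_eq, Set.mem_iUnion]
    constructor
    · intro hx
      refine ⟨Finset.univ.filter (fun j => x j < u), ?_, ?_⟩
      · simp [Finset.mem_powersetCard, hx]
      · intro j _
        by_cases h : j ∈ Finset.univ.filter (fun j => x j < u)
        · simp only [h, if_pos]
          simpa using (Finset.mem_filter.mp h).2
        · simp only [h, if_neg, not_false_iff]
          simp only [Finset.mem_filter, Finset.mem_univ, true_and, not_lt] at h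
          exact h
    · rintro ⟨S, hS, hx⟩
      rw [filter_eq_of_mem_D hx]
      exact (Finset.mem_powersetCard.mp hS).2
  rw [hun, measure_biUnion_finset]
  · rw [Finset.sum_congr rfl (fun S hS => by
      rw [nu_D h0 h1 S, (Finset.mem_powersetCard.mp hS).2])]
    rw [Finset.sum_const, Finset.card_powersetCard, Finset.card_univ, Fintype.card_fin]
    simp [nsmul_eq_mul, mul_assoc]
  · intro S hS T hT hST
    refine Set.disjoint_left.mpr fun x hxS hxT => hST ?_
    rw [← filter_eq_of_mem_D hxS, ← filter_eq_of_mem_D hxT]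
  · intro S _
    exact measurableSet_D m u S



/-- Symmetry: order regions with the same rank of `u` have equal measure. -/
lemma nu_A_eq {m : ℕ} (u : ℝ) {σ τ : Equiv.Perm (Fin (m+1))}
    (h : σ (Fin.last m) = τ (Fin.last m)) : nu m (A m u σ) = nu m (A m u τ) := by
  set κ : Equiv.Perm (Fin (m+1)) := τ⁻¹ * σ with hκdef
  have hκ : κ (Fin.last m) = Fin.last m := by
    simp only [hκdef, Equiv.Perm.mul_apply, h, Equiv.Perm.coe_inv, Equiv.symm_apply_apply]
  set ρ : Equiv.Perm (Fin m) := resL κ hκ with hρ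
  have hmp : MeasurePreserving
      (MeasurableEquiv.piCongrLeft (fun _ : Fin m => ℝ) (ρ⁻¹ : Equiv.Perm (Fin m)))
      (nu m) (nu m) :=
    measurePreserving_piCongrLeft (fun _ : Fin m => mu) (ρ⁻¹ : Equiv.Perm (Fin m))
  have hcoe : ∀ x : Fin m → ℝ,
      (MeasurableEquiv.piCongrLeft (fun _ : Fin m => ℝ) (ρ⁻¹ : Equiv.Perm (Fin m))) x
        = x ∘ ⇑ρ := by
    intro x
    funext i
    rw [MeasurableEquiv.coe_piCongrLeft, Equiv.piCongrLeft_apply_eq_cast]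
    simp [Equiv.Perm.inv_def]
  have hpre : (MeasurableEquiv.piCongrLeft (fun _ : Fin m => ℝ) (ρ⁻¹ : Equiv.Perm (Fin m)))
      ⁻¹' (A m u σ) = A m u τ := by
    ext x
    simp only [Set.mem_preimage, hcoe, A, mem_setOf_eq]
    have h1 : (Fin.snoc (x ∘ ⇑ρ) u : Fin (m+1) → ℝ) = (Fin.snoc x u : Fin (m+1) → ℝ) ∘ ⇑κ :=
      (snoc_comp_resL κ hκ x u).symm
    rw [h1]
    have h2 : ((Fin.snoc x u : Fin (m+1) → ℝ) ∘ ⇑κ) ∘ ⇑σ⁻¹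
        = (Fin.snoc x u : Fin (m+1) → ℝ) ∘ ⇑τ⁻¹ := by
      funext j
      simp [hκdef, Equiv.Perm.mul_apply]
    rw [h2]
  rw [← hpre, hmp.measure_preimage (measurableSet_A m u σ).nullMeasurableSet]

/-- The union of order regions over the fiber `{σ | σ last = i}`. -/
lemma union_fiber {m : ℕ} (u : ℝ) (i : Fin (m+1)) :
    (⋃ σ ∈ Finset.univ.filter (fun σ : Equiv.Perm (Fin (m+1)) => σ (Fin.last m) = i),
        A m u σ)
      = {x | Function.Injective (Fin.snoc x u : Fin (m+1) → ℝ) ∧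
          (Finset.univ.filter fun j => x j < u).card = (i : ℕ)} := by
  ext x
  simp only [Set.mem_iUnion, Finset.mem_filter, Finset.mem_univ, true_and, mem_setOf_eq,
    exists_prop]
  constructor
  · rintro ⟨σ, hσi, hσ⟩
    refine ⟨injective_of_A hσ, ?_⟩
    rw [← rank_last hσ, hσi]
  · rintro ⟨hinj, hcard⟩
    refine ⟨(Tuple.sort (Fin.snoc x u : Fin (m+1) → ℝ))⁻¹, ?_, ?_⟩
    · have hsm := strictMono_of_injective_sort hinj
      apply Fin.ext
      rw [rank_last hsm, hcard]
    · exact strictMono_of_injective_sort hinj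

lemma A_disjoint {m : ℕ} (u : ℝ) {σ τ : Equiv.Perm (Fin (m+1))} (h : σ ≠ τ) :
    Disjoint (A m u σ) (A m u τ) := by
  refine Set.disjoint_left.mpr fun x hσ hτ => h ?_
  rw [← stdz_eq hσ, ← stdz_eq hτ]

/-- Measure of each order region: `nu (A σ) = bern / m!`. -/
lemma nu_A {m : ℕ} {u : ℝ} (h0 : 0 ≤ u) (h1 : u ≤ 1) (σ : Equiv.Perm (Fin (m+1))) :
    (Nat.factorial m : ℝ≥0∞) * nu m (A m u σ)
      = (m.choose (σ (Fin.last m) : ℕ))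
        * (ENNReal.ofReal u ^ (σ (Fin.last m) : ℕ)
          * ENNReal.ofReal (1-u) ^ (m - (σ (Fin.last m) : ℕ))) := by
  classical
  set i := σ (Fin.last m) with hi
  have hsum : ∑ τ ∈ Finset.univ.filter
        (fun τ : Equiv.Perm (Fin (m+1)) => τ (Fin.last m) = i), nu m (A m u τ)
      = nu m {x | Function.Injective (Fin.snoc x u : Fin (m+1) → ℝ) ∧
          (Finset.univ.filter fun j => x j < u).card = (i : ℕ)} := by
    rw [← union_fiber u i]
    rw [measure_biUnion_finset]
    · intro a ha b hb hab
      exact A_disjoint u hab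
    · intro τ _
      exact measurableSet_A m u τ
  have hVC : nu m {x | Function.Injective (Fin.snoc x u : Fin (m+1) → ℝ) ∧
          (Finset.univ.filter fun j => x j < u).card = (i : ℕ)}
      = nu m {x | (Finset.univ.filter fun j => x j < u).card = (i : ℕ)} := by
    apply le_antisymm
    · exact measure_mono fun x hx => hx.2
    · calc nu m {x | (Finset.univ.filter fun j => x j < u).card = (i : ℕ)}
          ≤ nu m ({x | Function.Injective (Fin.snoc x u : Fin (m+1) → ℝ) ∧
              (Finset.univ.filter fun j => x j < u).card = (i : ℕ)} ∪ Nset m u) := by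
            apply measure_mono
            intro x hx
            by_cases hinj : Function.Injective (Fin.snoc x u : Fin (m+1) → ℝ)
            · exact Or.inl ⟨hinj, hx⟩
            · exact Or.inr (mem_Nset_of_not_injective hinj)
        _ ≤ _ + nu m (Nset m u) := measure_union_le _ _
        _ = _ := by rw [nu_Nset, add_zero]
  have hconst : ∀ τ ∈ Finset.univ.filter
      (fun τ : Equiv.Perm (Fin (m+1)) => τ (Fin.last m) = i), nu m (A m u τ) = nu m (A m u σ) := by
    intro τ hτ
    simp only [Finset.mem_filter, Finset.mem_univ, true_and] at hτ
    exact nu_A_eq u (by rw [hτ, hi])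
  rw [Finset.sum_congr rfl hconst, Finset.sum_const, card_fiber] at hsum
  rw [nsmul_eq_mul] at hsum
  rw [hsum, hVC, nu_card_filter_eq h0 h1]

lemma bern_nonneg {m : ℕ} (i : Fin (m+1)) {w : ℝ} (h0 : 0 ≤ w) (h1 : w ≤ 1) :
    0 ≤ bern m i w := by
  unfold bern
  apply mul_nonneg (mul_nonneg (by positivity) (pow_nonneg h0 _)) (pow_nonneg (by linarith) _)

lemma bE_eq {m : ℕ} (i : Fin (m+1)) {w : ℝ} (h0 : 0 ≤ w) (h1 : w ≤ 1) :
    ((m.choose (i : ℕ)) : ℝ≥0∞)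
        * (ENNReal.ofReal w ^ (i : ℕ) * ENNReal.ofReal (1-w) ^ (m - (i : ℕ)))
      = ENNReal.ofReal (bern m i w) := by
  unfold bern
  rw [ENNReal.ofReal_mul (by positivity), ENNReal.ofReal_mul (by positivity),
    ENNReal.ofReal_pow h0, ENNReal.ofReal_pow (by linarith), ENNReal.ofReal_natCast]
  ring

end Stmt17

open Stmt17 in
/-- Explicit formula:
`ψ_π(u,v) = (1/(r−1)!) Σ_{i=1}^r g_i(u) g_{π(i)}(v)` on `[0,1]²`, where `r = m+1`. -/
theorem stmt17 (m : ℕ) (π : Equiv.Perm (Fin (m+1))) :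
    ∀ u v : ℝ, u ∈ Set.Icc (0:ℝ) 1 → v ∈ Set.Icc (0:ℝ) 1 →
      psi m π (u, v)
        = (Nat.factorial m : ℝ)⁻¹ * ∑ i : Fin (m+1), bern m i u * bern m (π i) v := by
  classical
  intro u v hu hv
  obtain ⟨hu0, hu1⟩ := hu
  obtain ⟨hv0, hv1⟩ := hv
  -- the event, and its product-space version
  set E : Set (Fin m → ℝ × ℝ) :=
    {f | permOfPoints (Fin.snoc (fun j => (f j).1) u)
      (Fin.snoc (fun j => (f j).2) v) = π} with hE
  set E' : Set ((Fin m → ℝ) × (Fin m → ℝ)) :=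
    {p | permOfPoints (Fin.snoc p.1 u) (Fin.snoc p.2 v) = π} with hE'
  set U : Set ((Fin m → ℝ) × (Fin m → ℝ)) :=
    ⋃ σ : Equiv.Perm (Fin (m+1)), (A m u σ) ×ˢ (A m v (π * σ)) with hU
  have hUmeas : MeasurableSet U :=
    MeasurableSet.iUnion fun σ => (measurableSet_A m u σ).prod (measurableSet_A m v (π * σ))
  -- U ⊆ E'
  have hU1 : U ⊆ E' := by
    rintro ⟨x, y⟩ hxy
    simp only [hU, Set.mem_iUnion, Set.mem_prod] at hxy
    obtain ⟨σ, hx, hy⟩ := hxy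
    have h1 : stdz (Fin.snoc x u : Fin (m+1) → ℝ) = σ := stdz_eq hx
    have h2 : stdz (Fin.snoc y v : Fin (m+1) → ℝ) = π * σ := stdz_eq hy
    simp only [hE', mem_setOf_eq, permOfPoints, h1, h2, mul_assoc, mul_inv_cancel, mul_one]
  -- E' ⊆ U ∪ (null sets)
  have hU2 : E' ⊆ U ∪ ((Nset m u ×ˢ Set.univ) ∪ (Set.univ ×ˢ Nset m v)) := by
    rintro ⟨x, y⟩ hxy
    simp only [hE', mem_setOf_eq] at hxy
    by_cases hinjx : Function.Injective (Fin.snoc x u : Fin (m+1) → ℝ)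
    · by_cases hinjy : Function.Injective (Fin.snoc y v : Fin (m+1) → ℝ)
      · left
        simp only [hU, Set.mem_iUnion, Set.mem_prod]
        refine ⟨stdz (Fin.snoc x u : Fin (m+1) → ℝ), ?_, ?_⟩
        · exact strictMono_of_injective_sort hinjx
        · have h2 : stdz (Fin.snoc y v : Fin (m+1) → ℝ)
              = π * stdz (Fin.snoc x u : Fin (m+1) → ℝ) := by
            have := hxy
            rw [permOfPoints, mul_inv_eq_iff_eq_mul] at this
            exact this
          rw [← h2]
          exact strictMono_of_injective_sort hinjy
      · exact Or.inr (Or.inr ⟨Set.mem_univ x, mem_Nset_of_not_injective hinjy⟩)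
    · exact Or.inr (Or.inl ⟨mem_Nset_of_not_injective hinjx, Set.mem_univ y⟩)
  -- the null set
  have hNnull : ((nu m).prod (nu m)) ((Nset m u ×ˢ Set.univ) ∪ (Set.univ ×ˢ Nset m v)) = 0 := by
    apply measure_union_null
    · rw [Measure.prod_prod, nu_Nset, zero_mul]
    · rw [Measure.prod_prod, nu_Nset, mul_zero]
  -- E' is a.e. equal to U
  have hae : E' =ᵐ[(nu m).prod (nu m)] U := by
    rw [Filter.eventuallyEq_set]
    have h1 : ∀ᵐ p ∂((nu m).prod (nu m)),
        p ∉ ((Nset m u ×ˢ Set.univ) ∪ (Set.univ ×ˢ Nset m v)) := by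
      rw [MeasureTheory.ae_iff]
      exact measure_mono_null (fun p hp => not_not.mp hp) hNnull
    filter_upwards [h1] with p hp
    constructor
    · intro hpE
      rcases hU2 hpE with h | h
      · exact h
      · exact absurd h hp
    · intro hpU
      exact hU1 hpU
  -- transfer the measure via arrowProdEquivProdArrow
  have hΘ : MeasurePreserving (MeasurableEquiv.arrowProdEquivProdArrow ℝ ℝ (Fin m))
      (Measure.pi fun _ : Fin m => mu.prod mu) ((nu m).prod (nu m)) :=
    measurePreserving_arrowProdEquivProdArrow ℝ ℝ (Fin m) (fun _ => mu) (fun _ => mu)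
  have hEpre : (MeasurableEquiv.arrowProdEquivProdArrow ℝ ℝ (Fin m)) ⁻¹' E' = E := by
    ext f
    simp only [hE, hE', Set.mem_preimage, mem_setOf_eq,
      MeasurableEquiv.arrowProdEquivProdArrow, Equiv.arrowProdEquivProdArrow,
      MeasurableEquiv.coe_mk, Equiv.coe_fn_mk]
  have hE'null : NullMeasurableSet E' ((nu m).prod (nu m)) :=
    hUmeas.nullMeasurableSet.congr hae.symm
  have hPE : (Measure.pi fun _ : Fin m => unifSq) E = ((nu m).prod (nu m)) E' := by
    have : (Measure.pi fun _ : Fin m => unifSq)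
        = (Measure.pi fun _ : Fin m => mu.prod mu) := rfl
    rw [this, ← hEpre]
    exact hΘ.measure_preimage hE'null
  -- measure of U as a sum over permutations
  have hUval : ((nu m).prod (nu m)) U
      = ∑ σ : Equiv.Perm (Fin (m+1)), nu m (A m u σ) * nu m (A m v (π * σ)) := by
    rw [hU, measure_iUnion, tsum_fintype]
    · exact Finset.sum_congr rfl fun σ _ => Measure.prod_prod _ _
    · intro σ τ hστ
      have hA : Disjoint (A m u σ) (A m u τ) := A_disjoint u hστ
      simp only [Function.onFun]
      exact Set.disjoint_left.mpr fun p hp hp' => Set.disjoint_left.mp hA hp.1 hp'.1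
    · intro σ
      exact (measurableSet_A m u σ).prod (measurableSet_A m v (π * σ))
  -- compute the sum
  have hbE : ∀ σ : Equiv.Perm (Fin (m+1)),
      ((Nat.factorial m : ℝ≥0∞) * nu m (A m u σ)) * ((Nat.factorial m : ℝ≥0∞) * nu m (A m v (π * σ)))
        = ENNReal.ofReal (bern m (σ (Fin.last m)) u)
          * ENNReal.ofReal (bern m (π (σ (Fin.last m))) v) := by
    intro σ
    rw [nu_A hu0 hu1 σ, nu_A hv0 hv1 (π * σ), bE_eq _ hu0 hu1]
    have : (π * σ) (Fin.last m) = π (σ (Fin.last m)) := rfl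
    rw [this, bE_eq _ hv0 hv1]
  have hsum : (Nat.factorial m : ℝ≥0∞) * ((Nat.factorial m : ℝ≥0∞) * ((nu m).prod (nu m)) U)
      = (Nat.factorial m : ℝ≥0∞)
        * ∑ i : Fin (m+1), ENNReal.ofReal (bern m i u) * ENNReal.ofReal (bern m (π i) v) := by
    rw [hUval, Finset.mul_sum, Finset.mul_sum]
    have lhs_eq : ∑ σ : Equiv.Perm (Fin (m+1)),
        (Nat.factorial m : ℝ≥0∞) * ((Nat.factorial m : ℝ≥0∞) * (nu m (A m u σ) * nu m (A m v (π * σ))))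
        = ∑ σ : Equiv.Perm (Fin (m+1)),
          ENNReal.ofReal (bern m (σ (Fin.last m)) u) * ENNReal.ofReal (bern m (π (σ (Fin.last m))) v) := by
      refine Finset.sum_congr rfl fun σ _ => ?_
      rw [← hbE σ]; ring
    rw [lhs_eq]
    rw [← Finset.sum_fiberwise' Finset.univ (fun σ : Equiv.Perm (Fin (m+1)) => σ (Fin.last m))
      (fun i => ENNReal.ofReal (bern m i u) * ENNReal.ofReal (bern m (π i) v))]
    rw [Finset.mul_sum]
    refine Finset.sum_congr rfl fun i _ => ?_
    rw [Finset.sum_const, card_fiber, nsmul_eq_mul]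
  have hfacne : (Nat.factorial m : ℝ≥0∞) ≠ 0 := by
    simp [Nat.factorial_ne_zero]
  have hfactop : (Nat.factorial m : ℝ≥0∞) ≠ ⊤ := by
    simp
  have hkey : (Nat.factorial m : ℝ≥0∞) * ((nu m).prod (nu m)) U
      = ∑ i : Fin (m+1), ENNReal.ofReal (bern m i u) * ENNReal.ofReal (bern m (π i) v) :=
    (ENNReal.mul_right_inj hfacne hfactop).mp hsum
  -- conclude
  rw [psi, hPE, measure_congr hae]
  have htoReal : (((nu m).prod (nu m)) U).toReal
      = (Nat.factorial m : ℝ)⁻¹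
        * ∑ i : Fin (m+1), bern m i u * bern m (π i) v := by
    have hfin : ((nu m).prod (nu m)) U ≠ ⊤ := by
      exact (measure_lt_top _ _).ne
    have := congrArg ENNReal.toReal hkey
    rw [ENNReal.toReal_mul, ENNReal.toReal_sum (fun i _ => by
      exact ENNReal.mul_ne_top ENNReal.ofReal_ne_top ENNReal.ofReal_ne_top)] at this
    simp only [ENNReal.toReal_mul, ENNReal.toReal_natCast,
      ENNReal.toReal_ofReal (bern_nonneg _ hu0 hu1),
      ENNReal.toReal_ofReal (bern_nonneg _ hv0 hv1)] at this
    have hfr : (Nat.factorial m : ℝ) ≠ 0 := Nat.cast_ne_zero.mpr (Nat.factorial_ne_zero m)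
    field_simp at this ⊢
    linarith [this]
  exact htoReal
end

section
/- Fix r ≥ 2 and π ∈ S_r, and let ψ_π(u,v) = (1/(r−1)!)·Σ_{i=1}^r g_i(u)g_{π(i)}(v) with g_j(w) = C(r−1,j−1) w^{j−1}(1−w)^{r−j}. Then the symmetrized function (u,v) ↦ ψ_π(u,v) + ψ_π(v,u) is not constant on [0,1]². -/
lemma bern_zero (m : ℕ) (j : Fin (m + 1)) : bern m j 0 = if j = 0 then 1 else 0 := by
  rcases eq_or_ne j 0 with rfl | hj
  · simp [bern]
  · simp [bern, hj, Fin.val_ne_zero_iff.mpr hj]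

lemma bern_one (m : ℕ) (j : Fin (m + 1)) : bern m j 1 = if j = Fin.last m then 1 else 0 := by
  rcases eq_or_ne j (Fin.last m) with rfl | hj
  · simp [bern]
  · have : m - (j : ℕ) ≠ 0 := Nat.sub_ne_zero_of_lt (Fin.val_lt_last hj)
    simp [bern, hj, this]

lemma bern_pos (m : ℕ) (j : Fin (m + 1)) {w : ℝ} (h₀ : 0 < w) (h₁ : w < 1) : 0 < bern m j w := by
  have := Nat.choose_pos (Nat.lt_succ_iff.mp j.isLt)
  unfold bern
  have : 0 < 1 - w := sub_pos.mpr h₁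
  positivity

lemma sum_bern_zero_mul (m : ℕ) (σ : Equiv.Perm (Fin (m + 1))) (v : ℝ) :
    ∑ i, bern m i 0 * bern m (σ i) v = bern m (σ 0) v := by
  simp [bern_zero]

lemma sum_mul_bern_zero (m : ℕ) (σ : Equiv.Perm (Fin (m + 1))) (u : ℝ) :
    ∑ i, bern m i u * bern m (σ i) 0 = bern m (σ⁻¹ 0) u := by
  rw [← Equiv.sum_comp σ⁻¹]
  simp [bern_zero]

/- Without `hij` this fails: for `m = 1`, `bern 1 0 + bern 1 1 = 1`. -/
lemma not_exists_bern_add_bern_eq_const (m : ℕ) (hm : 1 ≤ m) {i j : Fin (m + 1)}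
    (hij : i = 0 ↔ j = 0) : ¬ ∃ c : ℝ, ∀ v ∈ Set.Icc (0 : ℝ) 1, bern m i v + bern m j v = c := by
  rintro ⟨c, hc⟩
  have h0 := hc 0 (by norm_num)
  have h1 := hc 1 (by norm_num)
  have hhalf := hc (1 / 2) (by norm_num)
  have hlast : (0 : Fin (m + 1)) ≠ Fin.last m := by
    rw [Ne, Fin.ext_iff, Fin.val_zero, Fin.val_last]; omega
  by_cases hi : i = 0
  · obtain rfl := hi
    obtain rfl := hij.mp rfl
    simp only [bern_zero, bern_one, hlast, if_true, if_false, add_zero] at h0 h1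
    linarith
  · have hj : j ≠ 0 := mt hij.mpr hi
    simp only [bern_zero, hi, hj, if_false] at h0
    have := bern_pos m i (w := 1 / 2) (by norm_num) (by norm_num)
    have := bern_pos m j (w := 1 / 2) (by norm_num) (by norm_num)
    linarith

/-- For `r = m+1 ≥ 2` and `π ∈ S_r`, the symmetrization
`(u,v) ↦ ψ_π(u,v) + ψ_π(v,u)` of `ψ_π(u,v) = (1/(r−1)!) Σ_i g_i(u) g_{π(i)}(v)`
is not constant on `[0,1]²`. -/
theorem stmt19 (m : ℕ) (hm : 1 ≤ m) (π : Equiv.Perm (Fin (m+1))) :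
    ¬ ∃ c : ℝ, ∀ u ∈ Set.Icc (0:ℝ) 1, ∀ v ∈ Set.Icc (0:ℝ) 1,
      ((Nat.factorial m : ℝ)⁻¹ * ∑ i : Fin (m+1), bern m i u * bern m (π i) v)
        + ((Nat.factorial m : ℝ)⁻¹ * ∑ i : Fin (m+1), bern m i v * bern m (π i) u) = c := by
  rintro ⟨c, hc⟩
  refine not_exists_bern_add_bern_eq_const m hm (i := π 0) (j := π⁻¹ 0)
    (by rw [Equiv.Perm.inv_eq_iff_eq, eq_comm]) ⟨Nat.factorial m * c, fun v hv => ?_⟩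
  have h := hc 0 (by norm_num) v hv
  rw [sum_bern_zero_mul, sum_mul_bern_zero, ← mul_add] at h
  rw [← h, mul_inv_cancel_left₀ (by positivity)]
end
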